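/- arXiv:1405.1058 — 6 statements merged into one kernel-verified Lean document; each statement's English description precedes it below -/
import Mathlib

section
/- Let n ≥ 2, let α ∈ [0,1/2)^n, and let (a_2,…,a_n, b_1,…,b_n) ∈ N^G(Σ;α). Then there exists σ = (σ_1,…,σ_n) ∈ SU(2)^n with σ ≠ (1,…,1) and σ ≠ (−1,…,−1) such that σ_1 a_l σ_l⁻¹ = a_l for all l = 2,…,n and σ_i b_i σ_i⁻¹ = b_i for all i = 1,…,n, if and only if there exists u ∈ SU(2) such that u b_1 u⁻¹ is a diagonal matrix and u (a_i b_i a_i⁻¹) u⁻¹ is a diagonal matrix for every i = 2,…,n. -/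
noncomputable section

open Matrix Complex Real

/-- 2×2 complex matrices. -/
abbrev M2 : Type := Matrix (Fin 2) (Fin 2) ℂ

/-- The special unitary group SU(2), as a subgroup of the unitary group. -/
def SU2 : Subgroup (Matrix.unitaryGroup (Fin 2) ℂ) where
  carrier := { g | Matrix.det (g : M2) = 1 }
  one_mem' := by simp
  mul_mem' := by
    intro a b ha hb
    simp only [Set.mem_setOf_eq, Matrix.UnitaryGroup.mul_val, Matrix.det_mul] at *
    rw [ha, hb, mul_one]
  inv_mem' := by
    intro a ha
    simp only [Set.mem_setOf_eq, Matrix.UnitaryGroup.inv_val] at *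
    show Matrix.det (star (a : M2)) = 1
    have : star (a : M2) = (a : M2)ᴴ := rfl
    rw [this, Matrix.det_conjTranspose, ha, star_one]

/-- The underlying matrix of an element of SU(2). -/
def mat (g : SU2) : M2 := ((g : Matrix.unitaryGroup (Fin 2) ℂ) : M2)

@[simp] lemma mat_one : mat (1 : SU2) = 1 := rfl
@[simp] lemma mat_mul (g h : SU2) : mat (g * h) = mat g * mat h := rfl
@[simp] lemma mat_inv (g : SU2) : mat g⁻¹ = star (mat g) := rfl

/-- The diagonal matrix `exp(α x₀) = diag(e^{2πiα}, e^{-2πiα})`. -/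
def expD (α : ℝ) : M2 :=
  Matrix.diagonal ![Complex.exp (2 * Real.pi * α * Complex.I),
                    Complex.exp (-(2 * Real.pi * α * Complex.I))]

lemma expD_mem (α : ℝ) : expD α ∈ Matrix.unitaryGroup (Fin 2) ℂ := by
  rw [Matrix.mem_unitaryGroup_iff]
  show expD α * (expD α)ᴴ = 1
  rw [expD, Matrix.diagonal_conjTranspose, Matrix.diagonal_mul_diagonal]
  have h : (fun i => ![Complex.exp (2 * Real.pi * α * Complex.I),
      Complex.exp (-(2 * Real.pi * α * Complex.I))] i *
      star ![Complex.exp (2 * Real.pi * α * Complex.I),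
      Complex.exp (-(2 * Real.pi * α * Complex.I))] i) = (1 : Fin 2 → ℂ) := by
    funext i
    fin_cases i <;>
      simp [Pi.star_apply, Complex.star_def, ← Complex.exp_conj,
        ← Complex.exp_add, Complex.conj_I, Complex.conj_ofReal] <;>
      simp [map_ofNat]
  rw [h]
  exact Matrix.diagonal_one

lemma expD_det (α : ℝ) : (expD α).det = 1 := by
  rw [expD, Matrix.det_diagonal]
  rw [show (Finset.univ : Finset (Fin 2)) = {0, 1} from rfl]
  rw [Finset.prod_insert (by simp), Finset.prod_singleton]
  simp [← Complex.exp_add]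

/-- `exp(α x₀)` as an element of SU(2). -/
def diagSU2 (α : ℝ) : SU2 := ⟨⟨expD α, expD_mem α⟩, expD_det α⟩

/-- The conjugacy class `C_α ⊂ SU(2)` of `exp(α x₀)`. -/
def Cα (α : ℝ) : Set SU2 := { g | ∃ u : SU2, u * diagSU2 α * u⁻¹ = g }

/-- The `G`-extended moduli space `N^G(Σ)` for `n = m+1` marked points: tuples
`(a_2,…,a_n, b_1,…,b_n)` with `b_1 (a_2 b_2 a_2⁻¹) ⋯ (a_n b_n a_n⁻¹) = 1`.
Here `a i` stands for `a_{i+2}` and `b i` for `b_{i+1}`. -/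
def NGset (m : ℕ) : Set ((Fin m → SU2) × (Fin (m+1) → SU2)) :=
  { p | p.2 0 * (List.ofFn (fun i : Fin m => p.1 i * p.2 i.succ * (p.1 i)⁻¹)).prod = 1 }

/-- The subset `N^G(Σ;α)` where each `b_i` lies in the conjugacy class `C_{α_i}`. -/
def NGsetW (m : ℕ) (α : Fin (m+1) → ℝ) : Set ((Fin m → SU2) × (Fin (m+1) → SU2)) :=
  { p | p ∈ NGset m ∧ ∀ i, p.2 i ∈ Cα (α i) }
/-! ### Auxiliary lemmas -/

lemma isDiag_of_entries {x : M2} (h01 : x 0 1 = 0) (h10 : x 1 0 = 0) : x.IsDiag := by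
  intro i j hij
  fin_cases i <;> fin_cases j <;> simp_all

lemma mat_injective : Function.Injective mat :=
  fun _ _ e => Subtype.ext (Subtype.ext e)

lemma mat_mul_star (g : SU2) : mat g * star (mat g) = 1 := by
  rw [← mat_inv, ← mat_mul, mul_inv_cancel, mat_one]

lemma mat_star_mul (g : SU2) : star (mat g) * mat g = 1 := by
  rw [← mat_inv, ← mat_mul, inv_mul_cancel, mat_one]

lemma mat_conj (u g : SU2) : mat (u * g * u⁻¹) = mat u * mat g * star (mat u) := by
  simp

/-- The structure of an SU(2) matrix: `g 1 1 = conj (g 0 0)` and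
`g 1 0 = - conj (g 0 1)`. -/
lemma su2_form (g : SU2) :
    mat g 1 1 = (starRingEnd ℂ) (mat g 0 0) ∧
    mat g 1 0 = -((starRingEnd ℂ) (mat g 0 1)) := by
  have hadj : (mat g)ᴴ = (mat g).adjugate := by
    have h1 : mat g * (mat g)ᴴ = 1 := mat_mul_star g
    have h2 : (mat g)ᴴ * mat g = 1 := mat_star_mul g
    have h3 : mat g * (mat g).adjugate = 1 := by
      have hdet : Matrix.det (mat g) = 1 := g.2
      rw [Matrix.mul_adjugate, hdet, one_smul]
    calc (mat g)ᴴ = (mat g)ᴴ * (mat g * (mat g).adjugate) := by rw [h3, mul_one]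
      _ = ((mat g)ᴴ * mat g) * (mat g).adjugate := by rw [mul_assoc]
      _ = (mat g).adjugate := by rw [h2, one_mul]
  rw [Matrix.adjugate_fin_two] at hadj
  constructor
  · have h := congrFun (congrFun hadj 1) 1
    simp [Matrix.conjTranspose_apply] at h
    have h' := congrArg (starRingEnd ℂ) h
    simpa using h'
  · have := congrFun (congrFun hadj 0) 1
    simp [Matrix.conjTranspose_apply] at this
    have h := congrArg (starRingEnd ℂ) this
    simpa using h

lemma su2_norm (g : SU2) :
    mat g 0 0 * (starRingEnd ℂ) (mat g 0 0) +
      mat g 0 1 * (starRingEnd ℂ) (mat g 0 1) = 1 := by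
  have hd : Matrix.det (mat g) = 1 := g.2
  rw [Matrix.det_fin_two] at hd
  rw [(su2_form g).1, (su2_form g).2] at hd
  linear_combination hd

/-- A matrix commuting with a diagonal matrix with distinct diagonal entries is
diagonal. -/
lemma isDiag_of_commute {d x : M2} (hd : d.IsDiag) (hne : d 0 0 ≠ d 1 1)
    (h : d * x = x * d) : x.IsDiag := by
  intro i j hij
  have h01 : d 0 1 = 0 := hd (by decide)
  have h10 : d 1 0 = 0 := hd (by decide)
  fin_cases i <;> fin_cases j <;> first
  | exact absurd rfl hij
  | · have e := congrFun (congrFun h 0) 1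
      simp [Matrix.mul_apply, Fin.sum_univ_succ, h01, h10] at e
      have : x 0 1 * (d 0 0 - d 1 1) = 0 := by linear_combination e
      rcases mul_eq_zero.mp this with h' | h'
      · exact h'
      · exact absurd (by linear_combination h') hne
  | · have e := congrFun (congrFun h 1) 0
      simp [Matrix.mul_apply, Fin.sum_univ_succ, h01, h10] at e
      have : x 1 0 * (d 0 0 - d 1 1) = 0 := by linear_combination -e
      rcases mul_eq_zero.mp this with h' | h'
      · exact h'
      · exact absurd (by linear_combination h') hne

/-- Any element of SU(2) other than `±1` can be conjugated, within SU(2), to a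
diagonal matrix with distinct diagonal entries. -/
lemma fin_two_ext {a b c d e f g h : ℂ} (h1 : a = e) (h2 : b = f)
    (h3 : c = g) (h4 : d = h) : !![a,b;c,d] = !![e,f;g,h] := by
  subst h1; subst h2; subst h3; subst h4; rfl

lemma diag_conj (g : SU2) (h1 : mat g ≠ 1) (hneg : mat g ≠ -1) :
    ∃ u : SU2, (mat (u * g * u⁻¹)).IsDiag ∧
      mat (u * g * u⁻¹) 0 0 ≠ mat (u * g * u⁻¹) 1 1 := by
  have hform := su2_form g
  have hnorm := su2_norm g
  by_cases hB0 : mat g 0 1 = 0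
  · refine ⟨1, ?_, ?_⟩
    · have hgg : (1:SU2) * g * (1:SU2)⁻¹ = g := by group
      rw [hgg]
      refine isDiag_of_entries hB0 ?_
      rw [hform.2, hB0]; simp
    · have hgg : (1:SU2) * g * (1:SU2)⁻¹ = g := by group
      rw [hgg, hform.1]
      intro hAA
      have hA2 : mat g 0 0 * mat g 0 0 = 1 := by
        have h := hnorm
        rw [hB0, ← hAA] at h
        simpa using h
      rcases mul_self_eq_one_iff.mp hA2 with h | h
      · apply h1
        ext i j
        fin_cases i <;> fin_cases j <;>
          simp [h, hB0, hform.1, hform.2, Matrix.one_apply]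
      · apply hneg
        ext i j
        fin_cases i <;> fin_cases j <;>
          simp [h, hB0, hform.1, hform.2, Matrix.one_apply]
  · -- B ≠ 0 : build the diagonalizing matrix explicitly
    obtain ⟨hf1, hf2⟩ := hform
    set t : ℝ := (mat g 0 0).re with ht
    have him : Complex.normSq (mat g 0 0) + Complex.normSq (mat g 0 1) = 1 := by
      have h := hnorm
      rw [Complex.mul_conj, Complex.mul_conj] at h
      exact_mod_cast h
    have hBpos : 0 < Complex.normSq (mat g 0 1) := Complex.normSq_pos.mpr hB0
    have ht2 : t ^ 2 < 1 := by
      have h1 : t ^ 2 ≤ Complex.normSq (mat g 0 0) := by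
        rw [Complex.normSq_apply, ← ht]
        nlinarith [sq_nonneg (mat g 0 0).im]
      nlinarith
    set s : ℝ := Real.sqrt (1 - t ^ 2) with hsdef
    have hs2 : s ^ 2 = 1 - t ^ 2 := Real.sq_sqrt (by linarith)
    have hspos : 0 < s := Real.sqrt_pos.mpr (by linarith)
    obtain ⟨lam, hlam⟩ : ∃ l : ℂ, l = (t : ℂ) + (s : ℂ) * Complex.I := ⟨_, rfl⟩
    have hlamre : lam.re = t := by rw [hlam]; simp
    have hlamim : lam.im = s := by rw [hlam]; simp
    have hmul : lam * (starRingEnd ℂ) lam = 1 := by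
      rw [Complex.mul_conj]
      rw [show Complex.normSq lam = 1 by
        rw [Complex.normSq_apply, hlamre, hlamim]; nlinarith]
      norm_num
    have htr : lam + (starRingEnd ℂ) lam = mat g 0 0 + (starRingEnd ℂ) (mat g 0 0) := by
      rw [Complex.add_conj, Complex.add_conj, hlamre, ht]
    obtain ⟨n, hn⟩ : ∃ r : ℝ, r =
        Real.sqrt (Complex.normSq (mat g 0 1) + Complex.normSq (lam - mat g 0 0)) := ⟨_, rfl⟩
    have hsum : (0:ℝ) < Complex.normSq (mat g 0 1) + Complex.normSq (lam - mat g 0 0) := by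
      have := Complex.normSq_nonneg (lam - mat g 0 0)
      linarith
    have hnpos : 0 < n := by rw [hn]; exact Real.sqrt_pos.mpr hsum
    have hnne : (n : ℂ) ≠ 0 := by exact_mod_cast hnpos.ne'
    have hkey : mat g 0 1 * (starRingEnd ℂ) (mat g 0 1) +
        (lam - mat g 0 0) * ((starRingEnd ℂ) lam - (starRingEnd ℂ) (mat g 0 0)) = (n : ℂ) * n := by
      rw [show (starRingEnd ℂ) lam - (starRingEnd ℂ) (mat g 0 0)
            = (starRingEnd ℂ) (lam - mat g 0 0) by rw [map_sub]]
      rw [Complex.mul_conj, Complex.mul_conj]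
      norm_cast
      rw [hn]
      exact (Real.mul_self_sqrt hsum.le).symm
    have hg : mat g = !![mat g 0 0, mat g 0 1;
        -((starRingEnd ℂ) (mat g 0 1)), (starRingEnd ℂ) (mat g 0 0)] := by
      have e := Matrix.eta_fin_two (mat g)
      rw [hf1, hf2] at e
      exact e
    obtain ⟨V, hV⟩ : ∃ V : M2, V = !![mat g 0 1,
                     -((starRingEnd ℂ) lam - (starRingEnd ℂ) (mat g 0 0));
                     lam - mat g 0 0,
                     (starRingEnd ℂ) (mat g 0 1)] := ⟨_, rfl⟩
    obtain ⟨W, hW⟩ : ∃ W : M2, W = ((n:ℂ)⁻¹) • V := ⟨_, rfl⟩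
    have hVH : Vᴴ = !![(starRingEnd ℂ) (mat g 0 1), (starRingEnd ℂ) lam - (starRingEnd ℂ) (mat g 0 0);
                       -(lam - mat g 0 0), mat g 0 1] := by
      rw [hV]
      ext i j
      fin_cases i <;> fin_cases j <;>
        simp [Matrix.conjTranspose_apply, Complex.star_def, map_neg, _root_.map_mul,
          map_sub, map_inv₀, Complex.conj_ofReal, Complex.conj_conj]
    have hVV : Vᴴ * V = ((n:ℂ) * (n:ℂ)) • (1 : M2) := by
      have hsm : ((n:ℂ) * (n:ℂ)) • (1 : M2) = !![(n:ℂ)*(n:ℂ), 0; 0, (n:ℂ)*(n:ℂ)] := by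
        rw [Matrix.one_fin_two]
        ext i j
        fin_cases i <;> fin_cases j <;> simp
      rw [hVH, hV, Matrix.mul_fin_two, hsm]
      apply fin_two_ext
      · linear_combination hkey
      · ring
      · ring
      · linear_combination hkey
    have hgV : mat g * V = V * !![lam, 0; 0, (starRingEnd ℂ) lam] := by
      rw [hg, hV, Matrix.mul_fin_two, Matrix.mul_fin_two]
      apply fin_two_ext
      · ring
      · linear_combination hnorm + (starRingEnd ℂ) lam * htr - hmul
      · linear_combination -hnorm - lam * htr + hmul
      · ring
    have hWW : Wᴴ * W = 1 := by
      rw [hW, Matrix.conjTranspose_smul, Matrix.smul_mul, Matrix.mul_smul, hVV]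
      rw [smul_smul, smul_smul]
      rw [show (star ((n:ℂ)⁻¹) * ((n:ℂ))⁻¹ * ((n:ℂ) * (n:ℂ))) = 1 by
        rw [Complex.star_def, map_inv₀, Complex.conj_ofReal]; field_simp; try ring]
      rw [one_smul]
    have hdetW : W.det = 1 := by
      rw [hW, Matrix.det_smul, hV, Matrix.det_fin_two_of]
      simp only [Fintype.card_fin]
      rw [show mat g 0 1 * (starRingEnd ℂ) (mat g 0 1) -
          -((starRingEnd ℂ) lam - (starRingEnd ℂ) (mat g 0 0)) * (lam - mat g 0 0)
          = (n:ℂ) * (n:ℂ) by linear_combination hkey]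
      field_simp
      try ring
    have hσW : mat g * W = W * !![lam, 0; 0, (starRingEnd ℂ) lam] := by
      rw [hW, Matrix.smul_mul, Matrix.mul_smul, hgV]
    have hWWr : W * Wᴴ = 1 := mul_eq_one_comm.mp hWW
    have humem : Wᴴ ∈ Matrix.unitaryGroup (Fin 2) ℂ := by
      rw [Matrix.mem_unitaryGroup_iff]
      show Wᴴ * star Wᴴ = 1
      rw [Matrix.star_eq_conjTranspose, Matrix.conjTranspose_conjTranspose]
      exact hWW
    have hudet : Matrix.det (Wᴴ) = 1 := by
      rw [Matrix.det_conjTranspose, hdetW, star_one]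
    have hconjmat : mat ((⟨⟨Wᴴ, humem⟩, hudet⟩ : SU2) * g * (⟨⟨Wᴴ, humem⟩, hudet⟩ : SU2)⁻¹)
        = !![lam, 0; 0, (starRingEnd ℂ) lam] := by
      rw [mat_conj]
      show Wᴴ * mat g * star Wᴴ = _
      rw [Matrix.star_eq_conjTranspose, Matrix.conjTranspose_conjTranspose,
        mul_assoc, hσW, ← mul_assoc, hWW, one_mul]
    refine ⟨⟨⟨Wᴴ, humem⟩, hudet⟩, ?_, ?_⟩
    · rw [hconjmat]
      exact isDiag_of_entries (by simp) (by simp)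
    · rw [hconjmat]
      rw [show (!![lam, 0; 0, (starRingEnd ℂ) lam] : M2) 0 0 = lam by simp]
      rw [show (!![lam, 0; 0, (starRingEnd ℂ) lam] : M2) 1 1 = (starRingEnd ℂ) lam by simp]
      intro hcon
      have him2 := congrArg Complex.im hcon
      rw [Complex.conj_im, hlamim] at him2
      linarith

/-- The fixed "torus generator" diag(i, -i). -/
def Tmat : M2 := !![Complex.I, 0; 0, -Complex.I]

lemma Tmat_mem : Tmat ∈ Matrix.unitaryGroup (Fin 2) ℂ := by
  rw [Matrix.mem_unitaryGroup_iff]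
  ext i j
  fin_cases i <;> fin_cases j <;>
    simp [Tmat, Matrix.mul_apply, Fin.sum_univ_succ, Matrix.one_apply]

lemma Tmat_det : Tmat.det = 1 := by
  simp [Tmat, Matrix.det_fin_two]

def tSU2 : SU2 := ⟨⟨Tmat, Tmat_mem⟩, Tmat_det⟩

@[simp] lemma mat_tSU2 : mat tSU2 = Tmat := rfl

lemma Tmat_commute {x : M2} (hx : x.IsDiag) : Tmat * x = x * Tmat := by
  have h01 : x 0 1 = 0 := hx (by decide)
  have h10 : x 1 0 = 0 := hx (by decide)
  ext i j
  fin_cases i <;> fin_cases j <;>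
    simp [Tmat, Matrix.mul_apply, Fin.sum_univ_succ, h01, h10] <;> ring

lemma comm_of_mat {x y : SU2} (h : mat x * mat y = mat y * mat x) :
    x * y = y * x := mat_injective (by simp [h])

lemma tconj_comm {u x : SU2} (h : (mat (u * x * u⁻¹)).IsDiag) :
    (u⁻¹ * tSU2 * u) * x = x * (u⁻¹ * tSU2 * u) := by
  have h1 : tSU2 * (u * x * u⁻¹) = (u * x * u⁻¹) * tSU2 :=
    comm_of_mat (by simpa using Tmat_commute h)
  calc u⁻¹ * tSU2 * u * x = u⁻¹ * (tSU2 * (u * x * u⁻¹)) * u := by group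
    _ = u⁻¹ * ((u * x * u⁻¹) * tSU2) * u := by rw [h1]
    _ = x * (u⁻¹ * tSU2 * u) := by group

/-- a point of `N^G(Σ;α)` has a stabilizer element other than
`±(1,…,1)` if and only if `b_1, a_2 b_2 a_2⁻¹, …, a_n b_n a_n⁻¹` lie on a common
maximal torus.  Here `n = m+1`. -/
theorem stmt_1 (m : ℕ) (hm : 1 ≤ m) (α : Fin (m+1) → ℝ)
    (hα : ∀ i, α i ∈ Set.Ico (0:ℝ) (1/2))
    (a : Fin m → SU2) (b : Fin (m+1) → SU2) (hab : (a, b) ∈ NGsetW m α) :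
    (∃ σ : Fin (m+1) → SU2,
        (¬ ∀ i, mat (σ i) = 1) ∧ (¬ ∀ i, mat (σ i) = -1) ∧
        (∀ l : Fin m, σ 0 * a l * (σ l.succ)⁻¹ = a l) ∧
        (∀ i : Fin (m+1), σ i * b i * (σ i)⁻¹ = b i)) ↔
      (∃ u : SU2, (mat (u * b 0 * u⁻¹)).IsDiag ∧
        ∀ i : Fin m, (mat (u * (a i * b i.succ * (a i)⁻¹) * u⁻¹)).IsDiag) := by
  constructor
  · rintro ⟨σ, h1, h2, h3, h4⟩
    have hcomm : ∀ i, σ i * b i = b i * σ i := fun i => mul_inv_eq_iff_eq_mul.mp (h4 i)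
    have hsucc : ∀ l : Fin m, σ l.succ = (a l)⁻¹ * σ 0 * a l := by
      intro l
      have e' : σ 0 * a l = a l * σ l.succ := mul_inv_eq_iff_eq_mul.mp (h3 l)
      rw [mul_assoc, e']
      simp
    have hne1 : mat (σ 0) ≠ 1 := by
      intro h
      apply h1
      intro i
      induction i using Fin.cases with
      | zero => exact h
      | succ l =>
        rw [hsucc l]
        simp only [mat_mul, mat_inv, h, mul_one]
        exact mat_star_mul (a l)
    have hne2 : mat (σ 0) ≠ -1 := by
      intro h
      apply h2
      intro i
      induction i using Fin.cases with
      | zero => exact h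
      | succ l =>
        rw [hsucc l]
        simp only [mat_mul, mat_inv, h]
        have e : star (mat (a l)) * (-1) * mat (a l)
            = -(star (mat (a l)) * mat (a l)) := by noncomm_ring
        rw [e, mat_star_mul]
    obtain ⟨u, hdiag, hne⟩ := diag_conj (σ 0) hne1 hne2
    refine ⟨u, ?_, ?_⟩
    · have hc : (u * σ 0 * u⁻¹) * (u * b 0 * u⁻¹) = (u * b 0 * u⁻¹) * (u * σ 0 * u⁻¹) := by
        calc (u * σ 0 * u⁻¹) * (u * b 0 * u⁻¹) = u * (σ 0 * b 0) * u⁻¹ := by simp [mul_assoc]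
          _ = u * (b 0 * σ 0) * u⁻¹ := by rw [hcomm 0]
          _ = (u * b 0 * u⁻¹) * (u * σ 0 * u⁻¹) := by simp [mul_assoc]
      exact isDiag_of_commute hdiag hne
        (by rw [← mat_mul, ← mat_mul]; exact congrArg mat hc)
    · intro l
      have h' := hcomm l.succ
      rw [hsucc l] at h'
      have hcl : σ 0 * (a l * b l.succ * (a l)⁻¹) = (a l * b l.succ * (a l)⁻¹) * σ 0 := by
        calc σ 0 * (a l * b l.succ * (a l)⁻¹)
            = a l * (((a l)⁻¹ * σ 0 * a l) * b l.succ) * (a l)⁻¹ := by simp [mul_assoc]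
          _ = a l * (b l.succ * ((a l)⁻¹ * σ 0 * a l)) * (a l)⁻¹ := by rw [h']
          _ = (a l * b l.succ * (a l)⁻¹) * σ 0 := by simp [mul_assoc]
      have hc : (u * σ 0 * u⁻¹) * (u * (a l * b l.succ * (a l)⁻¹) * u⁻¹)
          = (u * (a l * b l.succ * (a l)⁻¹) * u⁻¹) * (u * σ 0 * u⁻¹) := by
        calc (u * σ 0 * u⁻¹) * (u * (a l * b l.succ * (a l)⁻¹) * u⁻¹)
            = u * (σ 0 * (a l * b l.succ * (a l)⁻¹)) * u⁻¹ := by simp [mul_assoc]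
          _ = u * ((a l * b l.succ * (a l)⁻¹) * σ 0) * u⁻¹ := by rw [hcl]
          _ = (u * (a l * b l.succ * (a l)⁻¹) * u⁻¹) * (u * σ 0 * u⁻¹) := by simp [mul_assoc]
      exact isDiag_of_commute hdiag hne
        (by rw [← mat_mul, ← mat_mul]; exact congrArg mat hc)
  · rintro ⟨u, hd0, hdi⟩
    refine ⟨Fin.cases (u⁻¹ * tSU2 * u) (fun l => (a l)⁻¹ * (u⁻¹ * tSU2 * u) * a l),
      ?_, ?_, ?_, ?_⟩
    · intro h
      have h0 := h 0
      simp only [Fin.cases_zero] at h0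
      have e1 : u⁻¹ * tSU2 * u = 1 := mat_injective (by rw [h0, mat_one])
      have e2 : tSU2 = 1 := by
        calc tSU2 = u * (u⁻¹ * tSU2 * u) * u⁻¹ := by simp [mul_assoc]
          _ = u * 1 * u⁻¹ := by rw [e1]
          _ = 1 := by simp [mul_assoc]
      have e3 : Tmat = 1 := by rw [← mat_tSU2, e2, mat_one]
      have e4 := congrFun (congrFun e3 0) 0
      simp [Tmat, Matrix.one_apply] at e4
      have e5 := congrArg Complex.im e4
      simp at e5
    · intro h
      have h0 := h 0
      simp only [Fin.cases_zero] at h0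
      have h0' : star (mat u) * Tmat * mat u = -1 := by
        have := h0
        rw [show mat (u⁻¹ * tSU2 * u) = star (mat u) * Tmat * mat u by
          simp [mul_assoc]] at this
        exact this
      have e : Tmat = -1 := by
        calc Tmat = (mat u * star (mat u)) * Tmat * (mat u * star (mat u)) := by
              rw [mat_mul_star]; simp
          _ = mat u * (star (mat u) * Tmat * mat u) * star (mat u) := by
              simp only [mul_assoc]
          _ = mat u * (-1) * star (mat u) := by rw [h0']
          _ = -(mat u * star (mat u)) := by noncomm_ring
          _ = -1 := by rw [mat_mul_star]
      have e4 := congrFun (congrFun e 0) 0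
      simp [Tmat, Matrix.one_apply] at e4
      have := congrArg Complex.im e4
      simp at this
    · intro l
      simp only [Fin.cases_zero, Fin.cases_succ]
      simp [mul_assoc]
    · intro i
      induction i using Fin.cases with
      | zero =>
        simp only [Fin.cases_zero]
        rw [mul_inv_eq_iff_eq_mul]
        exact tconj_comm hd0
      | succ l =>
        simp only [Fin.cases_succ]
        rw [mul_inv_eq_iff_eq_mul]
        have hs := tconj_comm (hdi l)
        calc ((a l)⁻¹ * (u⁻¹ * tSU2 * u) * a l) * b l.succ
            = (a l)⁻¹ * ((u⁻¹ * tSU2 * u) * (a l * b l.succ * (a l)⁻¹)) * a l := by simp [mul_assoc]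
          _ = (a l)⁻¹ * ((a l * b l.succ * (a l)⁻¹) * (u⁻¹ * tSU2 * u)) * a l := by rw [hs]
          _ = b l.succ * ((a l)⁻¹ * (u⁻¹ * tSU2 * u) * a l) := by simp [mul_assoc]
end
end

section
/- Let n ≥ 3 and 1 ≤ m ≤ n−2. Let N⁺ be the set of (a⁺, b⁺) ∈ SU(2)^{m+1} × SU(2)^{m+2}, with a⁺ = (a⁺_2,…,a⁺_{m+2}) and b⁺ = (b⁺_1,…,b⁺_{m+2}), satisfying b⁺_1 (a⁺_2 b⁺_2 (a⁺_2)⁻¹) ⋯ (a⁺_{m+2} b⁺_{m+2} (a⁺_{m+2})⁻¹) = 1, and let N⁻ be the set of (a⁻, b⁻) ∈ SU(2)^{n−m−1} × SU(2)^{n−m}, with a⁻ = (a⁻_2,…,a⁻_{n−m}) and b⁻ = (b⁻_1,…,b⁻_{n−m}), satisfying b⁻_1 (a⁻_2 b⁻_2 (a⁻_2)⁻¹) ⋯ (a⁻_{n−m} b⁻_{n−m} (a⁻_{n−m})⁻¹) = 1. Let Z = {((a⁺,b⁺),(a⁻,b⁻)) ∈ N⁺ × N⁻ : b⁻_1 b⁺_{m+2}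 = 1}, with SU(2) acting on Z by σ·((a⁺,b⁺),(a⁻,b⁻)) = ((a⁺_2,…,a⁺_{m+1}, a⁺_{m+2}σ⁻¹, b⁺_1,…,b⁺_{m+1}, σ b⁺_{m+2} σ⁻¹), (σ a⁻_2,…,σ a⁻_{n−m}, σ b⁻_1 σ⁻¹, b⁻_2,…,b⁻_{n−m})). Then the map π_C sending ((a⁺,b⁺),(a⁻,b⁻)) to (a⁺_2,…,a⁺_{m+1}, a⁺_{m+2}a⁻_2, …, a⁺_{m+2}a⁻_{n−m}, b⁺_1,…,b⁺_{m+1}, b⁻_2,…,b⁻_{n−m}) takes values in N^G(Σ), is surjective onto N^G(Σ), its fibers are exactly the SU(2)-orbits in Z, and it induces a homeomorphism from the quotient space Z/SU(2) onto N^G(Σ). -/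
noncomputable section

open Matrix Complex Real

/-- The relation defining the extended moduli space: `b_1 ∏ a_i b_i a_i⁻¹ = 1`. -/
def NGrel {m : ℕ} (a : Fin m → SU2) (b : Fin (m+1) → SU2) : Prop :=
  b 0 * (List.ofFn (fun i : Fin m => a i * b i.succ * (a i)⁻¹)).prod = 1

/-- The set `Z ⊆ N⁺ × N⁻` of pairs glued along the curve `C`, i.e. with
`b⁻_1 b⁺_{m+2} = 1`.  Here `N⁺` has `m+2` boundary circles and `N⁻` has `k+1`. -/
def Zset (m k : ℕ) :
    Set (((Fin (m+1) → SU2) × (Fin (m+2) → SU2)) × ((Fin k → SU2) × (Fin (k+1) → SU2))) :=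
  { z | NGrel z.1.1 z.1.2 ∧ NGrel z.2.1 z.2.2 ∧
        z.2.2 0 * z.1.2 (Fin.last (m+1)) = 1 }

/-- The `SU(2)`-action on `Z` used for the gluing. -/
def actZ (m k : ℕ) (σ : SU2)
    (z : ((Fin (m+1) → SU2) × (Fin (m+2) → SU2)) × ((Fin k → SU2) × (Fin (k+1) → SU2))) :
    ((Fin (m+1) → SU2) × (Fin (m+2) → SU2)) × ((Fin k → SU2) × (Fin (k+1) → SU2)) :=
  ((fun i => if i = Fin.last m then z.1.1 i * σ⁻¹ else z.1.1 i,
    fun i => if i = Fin.last (m+1) then σ * z.1.2 i * σ⁻¹ else z.1.2 i),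
   (fun j => σ * z.2.1 j,
    fun j => if j = 0 then σ * z.2.2 j * σ⁻¹ else z.2.2 j))

lemma actZ_one (m k : ℕ) (z) : actZ m k 1 z = z := by
  obtain ⟨⟨ap, bp⟩, ⟨am, bm⟩⟩ := z
  unfold actZ
  simp only [Prod.mk.injEq]
  refine ⟨⟨?_, ?_⟩, ?_, ?_⟩ <;> funext i <;> try split_ifs
  all_goals group

lemma actZ_mul (m k : ℕ) (σ τ : SU2) (z) :
    actZ m k τ (actZ m k σ z) = actZ m k (τ * σ) z := by
  obtain ⟨⟨ap, bp⟩, ⟨am, bm⟩⟩ := z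
  unfold actZ
  simp only [Prod.mk.injEq]
  refine ⟨⟨?_, ?_⟩, ?_, ?_⟩ <;> funext i <;> try split_ifs
  all_goals group

/-- The orbit equivalence for the `SU(2)`-action on `Z`. -/
def zSetoid (m k : ℕ) : Setoid (Zset m k) where
  r z w := ∃ σ : SU2, actZ m k σ z.1 = w.1
  iseqv := by
    constructor
    · intro z; exact ⟨1, actZ_one m k z.1⟩
    · rintro z w ⟨σ, h⟩
      refine ⟨σ⁻¹, ?_⟩
      rw [← h, actZ_mul, inv_mul_cancel, actZ_one]
    · rintro z w v ⟨σ, h⟩ ⟨τ, h'⟩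
      refine ⟨τ * σ, ?_⟩
      rw [← actZ_mul, h, h']

/-- The gluing map `π_C`. -/
def piC (m k : ℕ)
    (z : ((Fin (m+1) → SU2) × (Fin (m+2) → SU2)) × ((Fin k → SU2) × (Fin (k+1) → SU2))) :
    (Fin (m+k) → SU2) × (Fin (m+k+1) → SU2) :=
  (fun i => if h : i.1 < m then z.1.1 ⟨i.1, by omega⟩
            else z.1.1 (Fin.last m) * z.2.1 ⟨i.1 - m, by omega⟩,
   fun i => if h : i.1 < m + 1 then z.1.2 ⟨i.1, by omega⟩
            else z.2.2 ⟨i.1 - m, by omega⟩)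


/-!
On `Z` the relation of `N⁻` and the gluing relation `b⁻₁ b⁺_{m+2} = 1` force
`b⁺_{m+2} = ∏ⱼ a⁻ⱼ b⁻ⱼ (a⁻ⱼ)⁻¹`. Substituting this into the last factor
`a⁺_{m+2} b⁺_{m+2} (a⁺_{m+2})⁻¹` of the relation of `N⁺` turns it into exactly the relation of
`N^G(Σ)` for `π_C z`. Conversely `π_C z` determines every coordinate of `z` except `a⁺_{m+2}`, and
the action moves `a⁺_{m+2}` freely: each `z ∈ Z` is `a⁺_{m+2}⁻¹ • unglue (π_C z)`, where
`unglue p` is the point of `Z` over `p` with `a⁺_{m+2} = 1`. So `π_C` descends to a bijection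
`Z/SU(2) → N^G(Σ)` whose inverse `p ↦ [unglue p]` is continuous, being built from products of
coordinates.
-/

section ConjProd

variable {G : Type*} [Group G] {n : ℕ}

def conjProd (a b : Fin n → G) : G :=
  (List.ofFn fun i => a i * b i * (a i)⁻¹).prod

lemma conjProd_append {m : ℕ} (a b : Fin m → G) (a' b' : Fin n → G) :
    conjProd (Fin.append a a') (Fin.append b b') = conjProd a b * conjProd a' b' := by
  rw [conjProd, List.ofFn_add]
  simp [conjProd]

lemma conjProd_snoc (a b : Fin n → G) (x y : G) :
    conjProd (Fin.snoc a x) (Fin.snoc b y) = conjProd a b * (x * y * x⁻¹) := by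
  rw [conjProd, List.ofFn_succ']
  simp [conjProd]

lemma conjProd_mul_left (c : G) (a b : Fin n → G) :
    conjProd (fun i => c * a i) b = c * conjProd a b * c⁻¹ := by
  rw [conjProd, conjProd, ← MulAut.conj_apply, map_list_prod, List.map_ofFn]
  congr 2; funext i; simp [mul_assoc]

lemma Continuous.conjProd {X : Type*} [TopologicalSpace X] [TopologicalSpace G]
    [IsTopologicalGroup G] {a b : X → Fin n → G} (ha : Continuous a) (hb : Continuous b) :
    Continuous fun x => _root_.conjProd (a x) (b x) := by
  simp only [_root_.conjProd, List.ofFn_eq_map]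
  exact continuous_list_prod _ fun i _ => by fun_prop

end ConjProd

section Gluing

abbrev ZAmbient (m k : ℕ) : Type :=
  ((Fin (m+1) → SU2) × (Fin (m+2) → SU2)) × ((Fin k → SU2) × (Fin (k+1) → SU2))

variable {m k : ℕ}

lemma NGrel_iff {n : ℕ} (a : Fin n → SU2) (b : Fin (n+1) → SU2) :
    NGrel a b ↔ b 0 * conjProd a (Fin.tail b) = 1 := Iff.rfl

lemma mem_NGset_iff {n : ℕ} (p : (Fin n → SU2) × (Fin (n+1) → SU2)) :
    p ∈ NGset n ↔ p.2 0 * conjProd p.1 (Fin.tail p.2) = 1 := Iff.rfl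

lemma piC_fst (z : ZAmbient m k) :
    (piC m k z).1 = Fin.append (Fin.init z.1.1) fun j => z.1.1 (Fin.last m) * z.2.1 j := by
  funext i
  refine Fin.addCases (fun i => ?_) (fun j => ?_) i
  · simp [piC]; rfl
  · simp [piC]

lemma piC_snd (z : ZAmbient m k) :
    (piC m k z).2 = Fin.cons (z.1.2 0) (Fin.append (Fin.init (Fin.tail z.1.2)) (Fin.tail z.2.2)) := by
  funext i
  refine Fin.cases ?_ (fun i => ?_) i
  · simp [piC]
  refine Fin.addCases (fun i => ?_) (fun j => ?_) i
  · simp [piC, Fin.init, Fin.tail]; rfl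
  · simp [piC, Fin.tail]
    exact congrArg _ (Fin.ext (by simp [add_assoc]))

lemma actZ_fst_fst (σ : SU2) (z : ZAmbient m k) :
    (actZ m k σ z).1.1 = Fin.snoc (Fin.init z.1.1) (z.1.1 (Fin.last m) * σ⁻¹) := by
  funext i
  refine Fin.lastCases ?_ (fun i => ?_) i <;> simp [actZ, Fin.init]

lemma actZ_fst_snd (σ : SU2) (z : ZAmbient m k) :
    (actZ m k σ z).1.2 = Fin.snoc (Fin.init z.1.2) (σ * z.1.2 (Fin.last (m+1)) * σ⁻¹) := by
  funext i
  refine Fin.lastCases ?_ (fun i => ?_) i <;> simp [actZ, Fin.init]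

lemma actZ_snd_fst (σ : SU2) (z : ZAmbient m k) :
    (actZ m k σ z).2.1 = fun j => σ * z.2.1 j := rfl

lemma actZ_snd_snd (σ : SU2) (z : ZAmbient m k) :
    (actZ m k σ z).2.2 = Fin.cons (σ * z.2.2 0 * σ⁻¹) (Fin.tail z.2.2) := by
  funext i
  refine Fin.cases ?_ (fun i => ?_) i <;> simp [actZ, Fin.tail]

lemma fst_snd_last_eq_conjProd {z : ZAmbient m k} (hz : z ∈ Zset m k) :
    z.1.2 (Fin.last (m+1)) = conjProd z.2.1 (Fin.tail z.2.2) :=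
  mul_left_cancel (hz.2.2.trans hz.2.1.symm)

lemma conjProd_piC (z : ZAmbient m k) :
    conjProd (piC m k z).1 (Fin.tail (piC m k z).2) =
      conjProd (Fin.init z.1.1) (Fin.init (Fin.tail z.1.2)) *
        (z.1.1 (Fin.last m) * conjProd z.2.1 (Fin.tail z.2.2) * (z.1.1 (Fin.last m))⁻¹) := by
  rw [piC_fst, piC_snd, Fin.tail_cons, conjProd_append, conjProd_mul_left]

lemma piC_mem_NGset {z : ZAmbient m k} (hz : z ∈ Zset m k) : piC m k z ∈ NGset (m+k) := by
  have hup := hz.1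
  rw [NGrel_iff, ← Fin.snoc_init_self z.1.1, ← Fin.snoc_init_self (Fin.tail z.1.2),
    conjProd_snoc] at hup
  rw [mem_NGset_iff, conjProd_piC, ← fst_snd_last_eq_conjProd hz]
  simpa [piC_snd, Fin.tail] using hup

def unglueQ (p : (Fin (m+k) → SU2) × (Fin (m+k+1) → SU2)) : SU2 :=
  conjProd (fun j => p.1 (Fin.natAdd m j)) (fun j => Fin.tail p.2 (Fin.natAdd m j))

def unglue (p : (Fin (m+k) → SU2) × (Fin (m+k+1) → SU2)) : ZAmbient m k :=
  ((Fin.snoc (fun i => p.1 (Fin.castAdd k i)) 1,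
    Fin.snoc (Fin.cons (p.2 0) fun i => Fin.tail p.2 (Fin.castAdd k i)) (unglueQ p)),
   (fun j => p.1 (Fin.natAdd m j),
    Fin.cons (unglueQ p)⁻¹ fun j => Fin.tail p.2 (Fin.natAdd m j)))

lemma piC_unglue (p : (Fin (m+k) → SU2) × (Fin (m+k+1) → SU2)) : piC m k (unglue p) = p := by
  rw [Prod.ext_iff, piC_fst, piC_snd]
  simp [unglue, ← Fin.tail_init_eq_init_tail, Fin.append_castAdd_natAdd]

lemma unglue_mem_Zset {p : (Fin (m+k) → SU2) × (Fin (m+k+1) → SU2)} (hp : p ∈ NGset (m+k)) :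
    unglue p ∈ Zset m k := by
  refine ⟨?_, ?_, ?_⟩
  · rw [mem_NGset_iff, ← Fin.append_castAdd_natAdd (f := p.1),
      ← Fin.append_castAdd_natAdd (f := Fin.tail p.2), conjProd_append] at hp
    simpa [NGrel_iff, unglue, ← Fin.cons_snoc_eq_snoc_cons, conjProd_snoc, unglueQ] using hp
  · simp [NGrel_iff, unglue, unglueQ]
  · simp [unglue]

lemma piC_actZ (σ : SU2) (z : ZAmbient m k) : piC m k (actZ m k σ z) = piC m k z := by
  rw [Prod.ext_iff, piC_fst, piC_fst, piC_snd, piC_snd, actZ_fst_fst, actZ_fst_snd, actZ_snd_fst,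
    actZ_snd_snd]
  simp [← Fin.tail_init_eq_init_tail, mul_assoc, Fin.init]

lemma actZ_unglue_piC {z : ZAmbient m k} (hz : z ∈ Zset m k) :
    actZ m k (z.1.1 (Fin.last m))⁻¹ (unglue (piC m k z)) = z := by
  have hlast := (fst_snd_last_eq_conjProd hz).symm
  have hzero : z.2.2 0 = (conjProd z.2.1 (Fin.tail z.2.2))⁻¹ := eq_inv_of_mul_eq_one_left hz.2.1
  refine Prod.ext (Prod.ext ?_ ?_) (Prod.ext ?_ ?_)
  · rw [actZ_fst_fst]
    simp [unglue, piC_fst]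
  · rw [actZ_fst_snd]
    simp only [unglue, unglueQ, piC_fst, piC_snd, Fin.append_left, Fin.append_right,
      Fin.cons_zero, Fin.tail_cons, Fin.init_snoc, Fin.snoc_last, conjProd_mul_left, hlast, mul_assoc,
      _root_.mul_inv_rev, inv_inv, inv_mul_cancel_left, inv_mul_cancel, mul_one]
    rw [← Fin.cons_snoc_eq_snoc_cons]
    exact (congrArg (Fin.cons _) (Fin.snoc_init_self (Fin.tail z.1.2))).trans (Fin.cons_self_tail _)
  · rw [actZ_snd_fst]
    simp [unglue, unglueQ, piC_fst, piC_snd]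
  · rw [actZ_snd_snd]
    simp [unglue, unglueQ, piC_fst, piC_snd, conjProd_mul_left, mul_assoc, ← hzero]

@[fun_prop]
lemma continuous_piC : Continuous (piC m k) := by
  refine .prodMk (continuous_pi fun i => ?_) (continuous_pi fun i => ?_) <;>
    split <;> fun_prop

@[fun_prop]
lemma continuous_unglue : Continuous (unglue (m := m) (k := k)) := by
  have hQ : Continuous (unglueQ (m := m) (k := k)) := Continuous.conjProd (by fun_prop) (by fun_prop)
  unfold unglue
  fun_prop

def piCQuotientHomeomorph (m k : ℕ) : Quotient (zSetoid m k) ≃ₜ NGset (m+k) where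
  toFun := Quotient.lift (fun z => ⟨piC m k z.1, piC_mem_NGset z.2⟩) fun z _ ⟨σ, h⟩ =>
    Subtype.ext ((piC_actZ σ z.1).symm.trans (congrArg (piC m k) h))
  invFun p := Quotient.mk _ ⟨unglue p.1, unglue_mem_Zset p.2⟩
  left_inv := Quotient.ind fun z => Quotient.sound ⟨_, actZ_unglue_piC z.2⟩
  right_inv p := Subtype.ext (piC_unglue p.1)
  continuous_toFun := continuous_quot_lift _ (by fun_prop)
  continuous_invFun := continuous_quot_mk.comp (by fun_prop)

end Gluing

theorem stmt_3_general (m k : ℕ) :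
    (∀ z ∈ Zset m k, piC m k z ∈ NGset (m+k)) ∧
    (∀ p ∈ NGset (m+k), ∃ z ∈ Zset m k, piC m k z = p) ∧
    (∀ z w : Zset m k, piC m k z.1 = piC m k w.1 ↔ ∃ σ : SU2, actZ m k σ z.1 = w.1) ∧
    (∃ h : Quotient (zSetoid m k) ≃ₜ NGset (m+k),
      ∀ (z : Zset m k) (p : (Fin (m+k) → SU2) × (Fin (m+k+1) → SU2))
        (hp : p ∈ NGset (m+k)),
        piC m k z.1 = p → h (Quotient.mk (zSetoid m k) z) = ⟨p, hp⟩) := by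
  refine ⟨fun z hz => piC_mem_NGset hz, fun p hp => ⟨unglue p, unglue_mem_Zset hp, piC_unglue p⟩,
    fun z w => ⟨fun h => ?_, fun ⟨σ, h⟩ => by rw [← h, piC_actZ]⟩,
    piCQuotientHomeomorph m k, fun z p hp h => Subtype.ext h⟩
  exact Quotient.exact ((piCQuotientHomeomorph m k).injective (Subtype.ext h))

/-- the gluing map `π_C` is a surjection of `Z` onto `N^G(Σ)` whose fibers
are the `SU(2)`-orbits, and it induces a homeomorphism `Z/SU(2) ≅ N^G(Σ)`.
Here the glued surface has `n = m+k+1` boundary circles. -/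
theorem stmt_3 (m k : ℕ) (hm : 1 ≤ m) (hk : 1 ≤ k) :
    (∀ z ∈ Zset m k, piC m k z ∈ NGset (m+k)) ∧
    (∀ p ∈ NGset (m+k), ∃ z ∈ Zset m k, piC m k z = p) ∧
    (∀ z w : Zset m k, piC m k z.1 = piC m k w.1 ↔ ∃ σ : SU2, actZ m k σ z.1 = w.1) ∧
    (∃ h : Quotient (zSetoid m k) ≃ₜ NGset (m+k),
      ∀ (z : Zset m k) (p : (Fin (m+k) → SU2) × (Fin (m+k+1) → SU2))
        (hp : p ∈ NGset (m+k)),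
        piC m k z.1 = p → h (Quotient.mk (zSetoid m k) z) = ⟨p, hp⟩) :=
  stmt_3_general m k
end
end

section
/- Let α_1, α_2, α_3 ∈ [0,1/2]. There exist g_1, g_2, g_3 ∈ SU(2) with g_i ∈ C_{α_i} for i = 1,2,3 and g_1 g_2 g_3 = 1 if and only if |α_1 − α_2| ≤ α_3 and α_3 ≤ min(α_1 + α_2, 1 − α_1 − α_2). -/
noncomputable section

open Matrix Complex Real

/-!
Write `g₁ = u D₁ u⁻¹`, `g₂ = v D₂ v⁻¹` with `Dᵢ = exp(αᵢ x₀)`. For `w = u⁻¹ v` with first row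
`(a, b)`, the trace of `D₁ w D₂ w⁻¹` is `2 (|a|² cos 2π(α₁ + α₂) + |b|² cos 2π(α₁ - α₂))`, and
`|a|²` takes every value in `[0, 1]`. An element of `SU(2)` lies in `C_α` exactly when its trace is
`2 cos 2πα` (a unit eigenvector for `exp(2πiα)` conjugates it to `exp(α x₀)`), so the triple
exists iff `cos 2πα₃` lies between `cos 2π(α₁ - α₂) = cos 2π|α₁ - α₂|` and
`cos 2π(α₁ + α₂) = cos 2π min(α₁ + α₂, 1 - α₁ - α₂)`; as `cos` decreases on `[0, π]`, this is the
stated inequality.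
-/

open ComplexConjugate

namespace SU2

def phase (α : ℝ) : ℂ := exp (2 * π * α * I)

lemma phase_add (α β : ℝ) : phase (α + β) = phase α * phase β := by
  rw [phase, phase, phase, ← Complex.exp_add]; push_cast; ring_nf

lemma conj_phase (α : ℝ) : conj (phase α) = phase (-α) := by
  rw [phase, phase, ← Complex.exp_conj]
  simp only [map_mul, conj_I, conj_ofReal, map_ofNat]
  push_cast; ring_nf

lemma phase_mul_phase_neg (α : ℝ) : phase α * phase (-α) = 1 := by
  rw [← phase_add, add_neg_cancel, phase]; simp

lemma phase_add_phase_neg (α : ℝ) :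
    phase α + phase (-α) = ((2 * Real.cos (2 * π * α) : ℝ) : ℂ) := by
  rw [← conj_phase, Complex.add_conj, phase, ← ofReal_ofNat, ← ofReal_mul, ← ofReal_mul,
    Complex.exp_ofReal_mul_I_re]

lemma expD_eq (α : ℝ) : expD α = !![phase α, 0; 0, phase (-α)] := by
  rw [expD, Matrix.diagonal_fin_two, phase, phase]
  push_cast; ring_nf

lemma mat_injective : Function.Injective mat := fun _ _ h => Subtype.ext (Subtype.ext h)

lemma mat_mul_star (g : SU2) : mat g * star (mat g) = 1 := by
  rw [← mat_inv, ← mat_mul, mul_inv_cancel, mat_one]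

lemma star_mul_mat (g : SU2) : star (mat g) * mat g = 1 := by
  rw [← mat_inv, ← mat_mul, inv_mul_cancel, mat_one]

lemma mat_diagSU2 (α : ℝ) : mat (diagSU2 α) = expD α := rfl

lemma det_mat (g : SU2) : (mat g).det = 1 := g.2

lemma mat_eq (g : SU2) :
    mat g = !![mat g 0 0, mat g 0 1; -conj (mat g 0 1), conj (mat g 0 0)] := by
  have hadj : star (mat g) = (mat g).adjugate := by
    rw [← Matrix.inv_eq_right_inv (mat_mul_star g), Matrix.inv_def, det_mat, Ring.inverse_one,
      one_smul]
  have h00 := congrFun (congrFun hadj 0) 0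
  have h01 := congrFun (congrFun hadj 0) 1
  simp only [Matrix.adjugate_fin_two, Matrix.star_apply, Matrix.of_apply, Matrix.cons_val',
    Matrix.cons_val_zero, Matrix.cons_val_one, Matrix.empty_val', Matrix.cons_val_fin_one,
    RCLike.star_def] at h00 h01
  have h10 : mat g 1 0 = -conj (mat g 0 1) := by rw [← Complex.conj_conj (mat g 1 0), h01, map_neg]
  rw [h00, ← h10]
  exact Matrix.eta_fin_two _

lemma normSq_add_normSq (g : SU2) : normSq (mat g 0 0) + normSq (mat g 0 1) = 1 := by
  have h := det_mat g
  rw [mat_eq g, Matrix.det_fin_two_of, mul_neg, sub_neg_eq_add, mul_conj, mul_conj] at h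
  exact_mod_cast h

def mkSU2 (a b : ℂ) (h : normSq a + normSq b = 1) : SU2 :=
  ⟨⟨!![a, b; -conj b, conj a], by
    have h' : a * conj a + b * conj b = 1 := by rw [mul_conj, mul_conj]; exact_mod_cast h
    rw [Matrix.mem_unitaryGroup_iff]
    ext i j
    fin_cases i <;> fin_cases j <;>
      simp [Matrix.mul_apply, mul_comm] <;> linear_combination h'⟩, by
    show Matrix.det _ = 1
    rw [Matrix.det_fin_two_of, mul_neg, sub_neg_eq_add, mul_conj, mul_conj]
    exact_mod_cast h⟩

@[simp] lemma mat_mkSU2 (a b : ℂ) (h : normSq a + normSq b = 1) :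
    mat (mkSU2 a b h) = !![a, b; -conj b, conj a] := rfl

lemma trace_mat_conj (u g : SU2) : trace (mat (u * g * u⁻¹)) = trace (mat g) := by
  rw [mat_mul, mat_mul, Matrix.trace_mul_comm, ← Matrix.mul_assoc, mat_inv, star_mul_mat,
    Matrix.one_mul]

lemma trace_mat_inv (g : SU2) : trace (mat g⁻¹) = conj (trace (mat g)) :=
  Matrix.trace_conjTranspose (mat g)

lemma trace_mat_diagSU2 (α : ℝ) :
    trace (mat (diagSU2 α)) = ((2 * Real.cos (2 * π * α) : ℝ) : ℂ) := by
  rw [← phase_add_phase_neg, ← Matrix.trace_fin_two_of, ← expD_eq, mat_diagSU2]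

lemma trace_of_mem_Cα {g : SU2} {α : ℝ} (hg : g ∈ Cα α) :
    trace (mat g) = ((2 * Real.cos (2 * π * α) : ℝ) : ℂ) := by
  obtain ⟨u, rfl⟩ := hg
  rw [trace_mat_conj, trace_mat_diagSU2]

lemma mem_Cα_iff_exists_mul_eq (g : SU2) (α : ℝ) :
    g ∈ Cα α ↔ ∃ u : SU2, mat u * expD α = mat g * mat u := by
  refine exists_congr fun u => ?_
  rw [mul_inv_eq_iff_eq_mul, ← mat_injective.eq_iff]
  rfl

/-- `(b, l - a)` is an eigenvector for `l` of the `SU(2)` matrix with first row `(a, b)` and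
trace `l + conj l`; the second column is the orthogonal eigenvector for `conj l`. -/
lemma eigenvector_mul_eq (a b l : ℂ) (hl : l * conj l = 1) (htr : a + conj a = l + conj l)
    (hab : a * conj a + b * conj b = 1) :
    !![b, -conj (l - a); l - a, conj b] * !![l, 0; 0, conj l] =
      !![a, b; -conj b, conj a] * !![b, -conj (l - a); l - a, conj b] := by
  rw [Matrix.mul_fin_two, Matrix.mul_fin_two]
  ext i j
  fin_cases i <;> fin_cases j <;>
    simp only [Fin.zero_eta, Fin.mk_one, Matrix.of_apply, Matrix.cons_val_zero,
      Matrix.cons_val_one, Matrix.cons_val_fin_one, map_sub, mul_zero, add_zero, zero_add]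
  · ring
  · linear_combination conj l * htr - hab + hl
  · linear_combination -l * htr + hab - hl
  · ring

lemma mem_Cα_of_trace {g : SU2} {α : ℝ}
    (hg : trace (mat g) = ((2 * Real.cos (2 * π * α) : ℝ) : ℂ)) : g ∈ Cα α := by
  set a := mat g 0 0
  set b := mat g 0 1
  set e := phase α - a
  have hg_eq : mat g = !![a, b; -conj b, conj a] := mat_eq g
  have hD : expD α = !![phase α, 0; 0, conj (phase α)] := by rw [expD_eq, conj_phase]
  by_cases hbe : b = 0 ∧ e = 0
  · refine ⟨1, mat_injective ?_⟩
    rw [one_mul, inv_one, mul_one, mat_diagSU2, hD, hg_eq, hbe.1, ← sub_eq_zero.mp hbe.2]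
    simp
  have hab : a * conj a + b * conj b = 1 := by
    rw [mul_conj, mul_conj]; exact_mod_cast normSq_add_normSq g
  have htr : a + conj a = phase α + conj (phase α) := by
    rw [conj_phase, phase_add_phase_neg, ← hg, hg_eq, Matrix.trace_fin_two_of]
  have hpos : 0 < normSq b + normSq e := by
    rcases not_and_or.1 hbe with hb | he
    · exact add_pos_of_pos_of_nonneg (normSq_pos.2 hb) (normSq_nonneg e)
    · exact add_pos_of_nonneg_of_pos (normSq_nonneg b) (normSq_pos.2 he)
  set n := Real.sqrt (normSq b + normSq e)
  have hn : normSq (b / n) + normSq (-conj e / n) = 1 := by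
    rw [normSq_div, normSq_div, normSq_neg, normSq_conj, normSq_ofReal, ← add_div,
      Real.mul_self_sqrt hpos.le, div_self hpos.ne']
  refine (mem_Cα_iff_exists_mul_eq g α).2 ⟨mkSU2 _ _ hn, ?_⟩
  have hu : mat (mkSU2 _ _ hn) = (n⁻¹ : ℂ) • !![b, -conj e; e, conj b] := by
    ext i j
    fin_cases i <;> fin_cases j <;> simp [div_eq_inv_mul]
  have hl : phase α * conj (phase α) = 1 := by rw [conj_phase, phase_mul_phase_neg]
  rw [hu, Matrix.smul_mul, Matrix.mul_smul, hD, hg_eq, eigenvector_mul_eq a b _ hl htr hab]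

lemma trace_mat_diagSU2_mul_conj (α β : ℝ) (w : SU2) :
    trace (mat (diagSU2 α * (w * diagSU2 β * w⁻¹))) =
      ((normSq (mat w 0 0) * (2 * Real.cos (2 * π * (α + β))) +
        normSq (mat w 0 1) * (2 * Real.cos (2 * π * (α - β))) : ℝ) : ℂ) := by
  have hsum :
      phase (α + β) + phase (-(α + β)) = phase α * phase β + conj (phase α * phase β) := by
    rw [map_mul, conj_phase, conj_phase, ← phase_add, ← phase_add, neg_add]
  have hdiff : phase (α - β) + phase (-(α - β)) =
      phase α * conj (phase β) + conj (phase α * conj (phase β)) := by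
    rw [map_mul, Complex.conj_conj, conj_phase, conj_phase, ← phase_add, ← phase_add, neg_sub,
      sub_eq_add_neg, sub_eq_neg_add]
  rw [ofReal_add, ofReal_mul (normSq _), ofReal_mul (normSq _), ← phase_add_phase_neg,
    ← phase_add_phase_neg, hsum, hdiff, ← mul_conj, ← mul_conj]
  simp only [mat_mul, mat_inv, mat_diagSU2, expD_eq, ← conj_phase]
  rw [mat_eq w]
  simp only [Matrix.trace_fin_two, Matrix.mul_apply, Fin.sum_univ_two, Matrix.star_apply,
    Matrix.of_apply, Matrix.cons_val', Matrix.cons_val_zero, Matrix.cons_val_one,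
    Matrix.empty_val', Matrix.cons_val_fin_one, Complex.star_def, map_neg, map_mul,
    Complex.conj_conj]
  ring

lemma range_normSq_mat_zero_zero : Set.range (fun w : SU2 => normSq (mat w 0 0)) = Set.Icc 0 1 := by
  ext s
  constructor
  · rintro ⟨w, rfl⟩
    exact ⟨normSq_nonneg _, by linarith [normSq_add_normSq w, normSq_nonneg (mat w 0 1)]⟩
  · rintro ⟨hs0, hs1⟩
    have hw : normSq (Real.sqrt s : ℂ) + normSq (Real.sqrt (1 - s) : ℂ) = 1 := by
      rw [normSq_ofReal, normSq_ofReal, Real.mul_self_sqrt hs0,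
        Real.mul_self_sqrt (sub_nonneg.2 hs1), add_sub_cancel]
    exact ⟨mkSU2 _ _ hw, by simp [normSq_ofReal, Real.mul_self_sqrt hs0]⟩

theorem exists_mul_mul_eq_one_iff (α₁ α₂ α₃ : ℝ) :
    (∃ g₁ g₂ g₃ : SU2, g₁ ∈ Cα α₁ ∧ g₂ ∈ Cα α₂ ∧ g₃ ∈ Cα α₃ ∧ g₁ * g₂ * g₃ = 1) ↔
      Real.cos (2 * π * α₃) ∈
        segment ℝ (Real.cos (2 * π * (α₁ - α₂))) (Real.cos (2 * π * (α₁ + α₂))) := by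
  have htrace (w : SU2) : trace (mat (diagSU2 α₁ * (w * diagSU2 α₂ * w⁻¹))⁻¹) =
      ((2 * ((1 - normSq (mat w 0 0)) * Real.cos (2 * π * (α₁ - α₂)) +
        normSq (mat w 0 0) * Real.cos (2 * π * (α₁ + α₂))) : ℝ) : ℂ) := by
    rw [trace_mat_inv, trace_mat_diagSU2_mul_conj, conj_ofReal, ← normSq_add_normSq w]
    ring_nf
  rw [segment_eq_image, ← range_normSq_mat_zero_zero, ← Set.range_comp]
  simp only [Set.mem_range, Function.comp_apply, smul_eq_mul]
  constructor
  · rintro ⟨_, _, g₃, ⟨u, rfl⟩, ⟨v, rfl⟩, hg₃, hprod⟩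
    refine ⟨u⁻¹ * v, ?_⟩
    have hg₃_eq : g₃ = u * (diagSU2 α₁ * (u⁻¹ * v * diagSU2 α₂ * (u⁻¹ * v)⁻¹))⁻¹ * u⁻¹ := by
      rw [eq_inv_of_mul_eq_one_right hprod]; group
    have h := trace_of_mem_Cα hg₃
    rw [hg₃_eq, trace_mat_conj, htrace] at h
    exact_mod_cast (mul_right_injective₀ two_ne_zero) (Complex.ofReal_injective h)
  · rintro ⟨w, hw⟩
    refine ⟨diagSU2 α₁, w * diagSU2 α₂ * w⁻¹, _, ⟨1, by group⟩, ⟨w, rfl⟩, mem_Cα_of_trace ?_,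
      mul_inv_cancel _⟩
    rw [htrace, hw]

end SU2

lemma Real.cos_two_pi_mul_le_cos_two_pi_mul_iff {x y : ℝ} (hx : x ∈ Set.Icc (0 : ℝ) (1 / 2))
    (hy : y ∈ Set.Icc (0 : ℝ) (1 / 2)) :
    Real.cos (2 * π * x) ≤ Real.cos (2 * π * y) ↔ y ≤ x := by
  have hmem {z : ℝ} (hz : z ∈ Set.Icc (0 : ℝ) (1 / 2)) : 2 * π * z ∈ Set.Icc 0 π :=
    ⟨by nlinarith [hz.1, Real.pi_pos], by nlinarith [hz.2, Real.pi_pos]⟩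
  rw [Real.strictAntiOn_cos.le_iff_ge (hmem hx) (hmem hy)]
  exact mul_le_mul_iff_right₀ (by positivity)

lemma cos_two_pi_mem_segment_iff {α₁ α₂ α₃ : ℝ} (h₁ : α₁ ∈ Set.Icc (0 : ℝ) (1 / 2))
    (h₂ : α₂ ∈ Set.Icc (0 : ℝ) (1 / 2)) (h₃ : α₃ ∈ Set.Icc (0 : ℝ) (1 / 2)) :
    Real.cos (2 * π * α₃) ∈
        segment ℝ (Real.cos (2 * π * (α₁ - α₂))) (Real.cos (2 * π * (α₁ + α₂))) ↔
      |α₁ - α₂| ≤ α₃ ∧ α₃ ≤ min (α₁ + α₂) (1 - α₁ - α₂) := by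
  obtain ⟨h₁0, h₁1⟩ := h₁
  obtain ⟨h₂0, h₂1⟩ := h₂
  have hA : Real.cos (2 * π * (α₁ - α₂)) = Real.cos (2 * π * |α₁ - α₂|) := by
    rw [← Real.cos_abs, abs_mul, abs_of_pos Real.two_pi_pos]
  have hB : Real.cos (2 * π * (α₁ + α₂)) = Real.cos (2 * π * min (α₁ + α₂) (1 - α₁ - α₂)) := by
    rcases min_cases (α₁ + α₂) (1 - α₁ - α₂) with ⟨h, -⟩ | ⟨h, -⟩
    · rw [h]
    · rw [h, ← Real.cos_two_pi_sub]; ring_nf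
  have hA_mem : |α₁ - α₂| ∈ Set.Icc (0 : ℝ) (1 / 2) :=
    ⟨abs_nonneg _, abs_sub_le_iff.2 ⟨by linarith, by linarith⟩⟩
  have hB_mem : min (α₁ + α₂) (1 - α₁ - α₂) ∈ Set.Icc (0 : ℝ) (1 / 2) :=
    ⟨le_min (by linarith) (by linarith), min_le_iff.2 (by by_contra! h; linarith [h.1, h.2])⟩
  have hAB : |α₁ - α₂| ≤ min (α₁ + α₂) (1 - α₁ - α₂) := by
    refine le_min ?_ ?_ <;> exact abs_sub_le_iff.2 ⟨by linarith, by linarith⟩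
  rw [hA, hB, segment_eq_uIcc,
    Set.uIcc_of_ge ((Real.cos_two_pi_mul_le_cos_two_pi_mul_iff hB_mem hA_mem).2 hAB),
    Set.mem_Icc, Real.cos_two_pi_mul_le_cos_two_pi_mul_iff hB_mem h₃,
    Real.cos_two_pi_mul_le_cos_two_pi_mul_iff h₃ hA_mem, and_comm]

/-- the pair-of-pants inequality for triples in SU(2) conjugacy
classes with product one. -/
theorem stmt_6 (α₁ α₂ α₃ : ℝ) (h₁ : α₁ ∈ Set.Icc (0:ℝ) (1/2))
    (h₂ : α₂ ∈ Set.Icc (0:ℝ) (1/2)) (h₃ : α₃ ∈ Set.Icc (0:ℝ) (1/2)) :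
    (∃ g₁ g₂ g₃ : SU2, g₁ ∈ Cα α₁ ∧ g₂ ∈ Cα α₂ ∧ g₃ ∈ Cα α₃ ∧ g₁ * g₂ * g₃ = 1) ↔
      |α₁ - α₂| ≤ α₃ ∧ α₃ ≤ min (α₁ + α₂) (1 - α₁ - α₂) := by
  rw [SU2.exists_mul_mul_eq_one_iff, cos_two_pi_mem_segment_iff h₁ h₂ h₃]
end
end

section
/- Let n ≥ 2, let α ∈ (0,1/2)^n, and let (a_2,…,a_n, b_1,…,b_n) ∈ N^G(Σ;α). Set c_i = a_i b_i a_i⁻¹ for i = 2,…,n. Define the ℝ-linear map L : su(2)^{n−1} → su(2) by L(ξ_2,…,ξ_n) = Σ_{i=2}^{n} (c_2⋯c_{i−1}) (ξ_i − c_i ξ_i c_i⁻¹) (c_2⋯c_{i−1})⁻¹, where the empty product (for i = 2) is the identity matrix. Then L is surjective if and only if there is no u ∈ SU(2) such that u b_1 u⁻¹, u c_2 u⁻¹, …, u c_n u⁻¹ are all diagonal matrices. -/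
noncomputable section

open Matrix Complex Real

/-- The real vector space `su(2)` of skew-hermitian traceless 2×2 complex matrices,
as a predicate. -/
def Issu2 (ξ : M2) : Prop := ξᴴ = -ξ ∧ ξ.trace = 0

/-!
The image of `L` is the sum of the subspaces `Ad(d_i)(1 - Ad(c_i))(su(2))`, where
`d_i = c_2 ⋯ c_{i-1}`. The trace form is definite on `su(2)`, and `η ∈ su(2)` is orthogonal to the
`i`-th subspace exactly when it commutes with `d_i c_i d_i⁻¹ = d_{i+1} d_i⁻¹`; by induction on `i`
this holds for every `i` iff `η` commutes with every `c_i`, and then also with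
`b_1 = (c_2 ⋯ c_n)⁻¹`. So `L` fails to be onto iff some nonzero `η ∈ su(2)` commutes with
`b_1, c_2, …, c_n`. Such an `η` is conjugate in `SU(2)` to a diagonal matrix with distinct
eigenvalues, whose commutant is the diagonal torus; conversely a common torus contains a nonzero
element of `su(2)` commuting with all of them.
-/

lemma mat_mul_mat_inv (g : SU2) : mat g * mat g⁻¹ = 1 := by
  rw [← mat_mul, mul_inv_cancel, mat_one]

lemma mat_inv_mul_mat (g : SU2) : mat g⁻¹ * mat g = 1 := by
  rw [← mat_mul, inv_mul_cancel, mat_one]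

lemma mat_mul_mat_inv_mul (g : SU2) (X : M2) : mat g * (mat g⁻¹ * X) = X := by
  rw [← mul_assoc, mat_mul_mat_inv, one_mul]

lemma mat_inv_mul_mat_mul (g : SU2) (X : M2) : mat g⁻¹ * (mat g * X) = X := by
  rw [← mul_assoc, mat_inv_mul_mat, one_mul]

lemma mat_conj_mat_inv_conj (u : SU2) (X : M2) :
    mat u * (mat u⁻¹ * X * mat u) * mat u⁻¹ = X := by
  simp only [mul_assoc, mat_mul_mat_inv_mul, mat_mul_mat_inv, mul_one]

lemma mat_inv_conj_mat_conj (u : SU2) (X : M2) :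
    mat u⁻¹ * (mat u * X * mat u⁻¹) * mat u = X := by
  simp only [mul_assoc, mat_inv_mul_mat_mul, mat_inv_mul_mat, mul_one]

lemma commute_conj_iff (u : SU2) (A X : M2) :
    Commute (mat u * A * mat u⁻¹) (mat u * X * mat u⁻¹) ↔ Commute A X := by
  simp only [Commute, SemiconjBy, mul_assoc, mat_inv_mul_mat_mul]
  constructor
  · intro h
    simpa only [mul_assoc, mat_inv_mul_mat_mul, mat_inv_mul_mat, mul_one] using
      congrArg (fun Y => mat u⁻¹ * Y * mat u) h
  · intro h
    rw [← mul_assoc A, h, mul_assoc]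

lemma commute_mat_conj_iff (u g : SU2) (X : M2) :
    Commute (mat (u * g * u⁻¹)) (mat u * X * mat u⁻¹) ↔ Commute (mat g) X := by
  rw [mat_mul, mat_mul, commute_conj_iff]

lemma trace_mul_conj (η X : M2) (g : SU2) :
    (η * (mat g * X * mat g⁻¹)).trace = ((mat g⁻¹ * η * mat g) * X).trace := by
  simp only [← mul_assoc]
  rw [trace_mul_cycle, ← mul_assoc]

def su2 : Submodule ℝ M2 where
  carrier := {ξ | Issu2 ξ}
  zero_mem' := by simp [Issu2]
  add_mem' := by
    rintro ξ ζ ⟨hξ, hξt⟩ ⟨hζ, hζt⟩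
    exact ⟨by rw [conjTranspose_add, hξ, hζ, neg_add], by rw [trace_add, hξt, hζt, add_zero]⟩
  smul_mem' := by
    rintro r ξ ⟨hξ, hξt⟩
    exact ⟨by rw [conjTranspose_smul, hξ, smul_neg, star_trivial],
      by rw [trace_smul, hξt, smul_zero]⟩

lemma conj_mem_su2 (g : SU2) {ξ : M2} (hξ : ξ ∈ su2) : mat g * ξ * mat g⁻¹ ∈ su2 := by
  obtain ⟨hξ, hξt⟩ := hξ
  refine ⟨?_, by rw [trace_mul_cycle, mat_inv_mul_mat, one_mul, hξt]⟩
  rw [mat_inv, star_eq_conjTranspose, conjTranspose_mul, conjTranspose_mul, hξ,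
    conjTranspose_conjTranspose]
  noncomm_ring

lemma conj_inv_mem_su2 (g : SU2) {ξ : M2} (hξ : ξ ∈ su2) : mat g⁻¹ * ξ * mat g ∈ su2 := by
  simpa only [inv_inv] using conj_mem_su2 g⁻¹ hξ

open scoped ComplexOrder in
lemma eq_zero_of_trace_mul_self_eq_zero {ξ : M2} (hξ : ξ ∈ su2) (h : (ξ * ξ).trace = 0) :
    ξ = 0 := by
  rw [← trace_mul_conjTranspose_self_eq_zero_iff, hξ.1, mul_neg, trace_neg, h, neg_zero]

-- Coordinates in which the trace form on `su(2)` is `-2 ⟪v, w⟫`; they make orthogonal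
-- complements available.
def su2Param : EuclideanSpace ℝ (Fin 3) →ₗ[ℝ] M2 where
  toFun v := !![(v 0 : ℂ) * I, v 1 + v 2 * I; -v 1 + v 2 * I, -(v 0 * I)]
  map_add' v w := by
    ext i j
    fin_cases i <;> fin_cases j <;> simp <;> ring
  map_smul' r v := by
    ext i j
    fin_cases i <;> fin_cases j <;> simp [Complex.real_smul] <;> ring

lemma trace_su2Param_mul_su2Param (v w : EuclideanSpace ℝ (Fin 3)) :
    (su2Param v * su2Param w).trace = -2 * (inner ℝ v w : ℂ) := by
  simp [su2Param, trace_fin_two, PiLp.inner_apply, Fin.sum_univ_three, Complex.ext_iff]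
  constructor <;> ring

lemma su2Param_injective : Function.Injective su2Param := by
  rw [← LinearMap.ker_eq_bot, LinearMap.ker_eq_bot']
  intro v hv
  have h := trace_su2Param_mul_su2Param v v
  rw [hv, zero_mul, trace_zero, eq_comm, mul_eq_zero, Complex.ofReal_eq_zero] at h
  simpa using h

lemma range_su2Param : LinearMap.range su2Param = su2 := by
  apply le_antisymm
  · rintro _ ⟨v, rfl⟩
    constructor
    · ext i j
      fin_cases i <;> fin_cases j <;> simp [su2Param, Complex.ext_iff]
    · simp [su2Param, trace_fin_two]
  · rintro ξ ⟨hξ, hξt⟩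
    refine ⟨WithLp.toLp 2 ![(ξ 0 0).im, (ξ 0 1).re, (ξ 0 1).im], ?_⟩
    have h00 := congrFun (congrFun hξ 0) 0
    have h10 := congrFun (congrFun hξ 1) 0
    have hre := congrArg re hξt
    have him := congrArg im hξt
    simp only [trace_fin_two, add_re, add_im, zero_re, zero_im] at hre him
    ext i j
    fin_cases i <;> fin_cases j <;> simp [su2Param, Complex.ext_iff] at h00 h10 ⊢ <;>
      (try constructor) <;> linarith

lemma eq_su2_iff_forall_trace_mul_eq_zero {W : Submodule ℝ M2} (hW : W ≤ su2) :
    W = su2 ↔ ∀ η ∈ su2, (∀ X ∈ W, (η * X).trace = 0) → η = 0 := by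
  constructor
  · rintro rfl η hη h
    exact eq_zero_of_trace_mul_self_eq_zero hη (h η hη)
  · intro h
    have htop : W.comap su2Param = ⊤ := by
      rw [← Submodule.orthogonal_eq_bot_iff, Submodule.eq_bot_iff]
      intro v hv
      apply su2Param_injective
      rw [map_zero]
      refine h _ (range_su2Param ▸ LinearMap.mem_range_self _ v) fun X hX => ?_
      obtain ⟨w, rfl⟩ : X ∈ LinearMap.range su2Param := range_su2Param ▸ hW hX
      rw [trace_su2Param_mul_su2Param,
        Submodule.inner_left_of_mem_orthogonal (Submodule.mem_comap.mpr hX) hv]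
      simp
    refine le_antisymm hW fun ξ hξ => ?_
    obtain ⟨w, rfl⟩ : ξ ∈ LinearMap.range su2Param := range_su2Param ▸ hξ
    exact Submodule.mem_comap.mp (htop ▸ Submodule.mem_top)

lemma commute_mat_iff_conj_eq (g : SU2) (X : M2) :
    Commute (mat g) X ↔ mat g⁻¹ * X * mat g = X := by
  constructor
  · intro h
    rw [mul_assoc, ← h.eq, mat_inv_mul_mat_mul]
  · intro h
    calc mat g * X = mat g * (mat g⁻¹ * X * mat g) := by rw [h]
      _ = X * mat g := by rw [mul_assoc, mat_mul_mat_inv_mul]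

lemma forall_trace_mul_conj_sub_eq_zero_iff {η : M2} (hη : η ∈ su2) (d c : SU2) :
    (∀ ξ ∈ su2, (η * (mat d * (ξ - mat c * ξ * mat c⁻¹) * mat d⁻¹)).trace = 0) ↔
      Commute (mat (d * c * d⁻¹)) η := by
  set ρ := mat d⁻¹ * η * mat d
  have hηρ : η = mat d * ρ * mat d⁻¹ := (mat_conj_mat_inv_conj d η).symm
  have hρc : ρ - mat c⁻¹ * ρ * mat c ∈ su2 :=
    sub_mem (conj_inv_mem_su2 d hη) (conj_inv_mem_su2 c (conj_inv_mem_su2 d hη))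
  have htrace (ξ : M2) : (η * (mat d * (ξ - mat c * ξ * mat c⁻¹) * mat d⁻¹)).trace =
      ((ρ - mat c⁻¹ * ρ * mat c) * ξ).trace := by
    rw [trace_mul_conj, mul_sub, trace_sub, trace_mul_conj, sub_mul, trace_sub]
  conv_rhs => rw [hηρ, commute_mat_conj_iff, commute_mat_iff_conj_eq, eq_comm, ← sub_eq_zero]
  simp only [htrace]
  exact ⟨fun h => eq_zero_of_trace_mul_self_eq_zero hρc (h _ hρc),
    fun h ξ _ => by rw [h, zero_mul, trace_zero]⟩

def conjMap (g : SU2) : M2 →ₗ[ℝ] M2 :=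
  LinearMap.mulRight ℝ (mat g⁻¹) ∘ₗ LinearMap.mulLeft ℝ (mat g)

def twistedSum {m : ℕ} (d c : Fin m → SU2) : (Fin m → M2) →ₗ[ℝ] M2 :=
  LinearMap.lsum ℝ (fun _ => M2) ℝ fun i => conjMap (d i) ∘ₗ (1 - conjMap (c i))

section twistedSum

variable {m : ℕ} (d c : Fin m → SU2)

lemma twistedSum_apply (ξ : Fin m → M2) : twistedSum d c ξ =
    ∑ i, mat (d i) * (ξ i - mat (c i) * ξ i * mat (c i)⁻¹) * mat (d i)⁻¹ := by
  simp [twistedSum, conjMap]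

lemma twistedSum_single (i : Fin m) (ξ : M2) : twistedSum d c (Pi.single i ξ) =
    mat (d i) * (ξ - mat (c i) * ξ * mat (c i)⁻¹) * mat (d i)⁻¹ := by
  rw [twistedSum, LinearMap.lsum_piSingle]
  rfl

lemma forall_exists_twistedSum_eq_iff :
    (∀ η ∈ su2, ∃ ξ : Fin m → M2, (∀ i, ξ i ∈ su2) ∧ twistedSum d c ξ = η) ↔
      ∀ η ∈ su2, (∀ i, Commute (mat (d i * c i * (d i)⁻¹)) η) → η = 0 := by
  set W := (Submodule.pi Set.univ fun _ => su2).map (twistedSum d c)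
  have hW : W ≤ su2 := by
    rintro _ ⟨ξ, hξ, rfl⟩
    rw [twistedSum_apply]
    exact sum_mem fun i _ =>
      conj_mem_su2 _ (sub_mem (hξ i trivial) (conj_mem_su2 _ (hξ i trivial)))
  have hsurj : (∀ η ∈ su2, ∃ ξ : Fin m → M2, (∀ i, ξ i ∈ su2) ∧ twistedSum d c ξ = η) ↔
      W = su2 := by
    simp [le_antisymm_iff, hW, W, SetLike.le_def, Submodule.mem_pi]
  rw [hsurj, eq_su2_iff_forall_trace_mul_eq_zero hW]
  refine forall₂_congr fun η hη => imp_congr_left ?_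
  simp_rw [← forall_trace_mul_conj_sub_eq_zero_iff hη]
  constructor
  · intro h i ξ hξ
    have hsingle : Pi.single i ξ ∈ Submodule.pi Set.univ fun _ => su2 := by
      intro j _
      rcases eq_or_ne j i with rfl | hj
      · simpa using hξ
      · simp [hj, zero_mem]
    simpa [twistedSum_single] using h _ ⟨_, hsingle, rfl⟩
  · rintro h _ ⟨ξ, hξ, rfl⟩
    rw [twistedSum_apply, Finset.mul_sum, trace_sum]
    exact Finset.sum_eq_zero fun i _ => h i (ξ i) (hξ i trivial)

end twistedSum

section PrefixProducts

variable {G : Type*} [Group G] (H : Subgroup G) {m : ℕ} (c : Fin m → G)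

lemma prod_take_ofFn_mem {k : ℕ} (h : ∀ i : Fin m, (i : ℕ) < k → c i ∈ H) :
    ((List.ofFn c).take k).prod ∈ H := by
  refine H.list_prod_mem fun x hx => ?_
  obtain ⟨j, hj, rfl⟩ := List.mem_iff_getElem.mp hx
  simp only [List.length_take, List.length_ofFn, lt_min_iff] at hj
  simpa using h ⟨j, hj.2⟩ hj.1

lemma forall_conj_prod_take_mem_iff :
    (∀ i : Fin m, ((List.ofFn c).take i).prod * c i * ((List.ofFn c).take i).prod⁻¹ ∈ H) ↔
      ∀ i, c i ∈ H := by
  constructor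
  · intro h i
    induction i using Fin.strong_induction_on with
    | h i ih =>
      have hd := prod_take_ofFn_mem H c fun j hj => ih j hj
      exact (H.mul_mem_cancel_left hd).mp ((H.mul_mem_cancel_right (H.inv_mem hd)).mp (h i))
  · intro h i
    have hd := prod_take_ofFn_mem H c (k := i) fun j _ => h j
    exact H.mul_mem (H.mul_mem hd (h i)) (H.inv_mem hd)

end PrefixProducts

def matCentralizer (η : M2) : Subgroup SU2 where
  carrier := {g | Commute (mat g) η}
  one_mem' := Commute.one_left η
  mul_mem' {g h} hg hh := by
    simpa only [Set.mem_ofPred_eq, mat_mul] using hg.mul_left hh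
  inv_mem' {g} hg := by
    change Commute _ _
    rw [commute_mat_iff_conj_eq, inv_inv, hg.eq, mul_assoc, mat_mul_mat_inv, mul_one]

lemma mem_matCentralizer {η : M2} {g : SU2} : g ∈ matCentralizer η ↔ Commute (mat g) η := Iff.rfl

lemma exists_conj_eq_of_unitary {U : M2} (hU : U ∈ unitaryGroup (Fin 2) ℂ) (e : Fin 2 → ℂ) :
    ∃ u : SU2, mat u * (U * diagonal e * star U) * mat u⁻¹ = diagonal e := by
  have hδ : U.det * star U.det = 1 := (det_of_mem_unitary hU).2
  -- `K` corrects the determinant of `U` without changing the conjugation action on diagonals.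
  set K : M2 := diagonal ![star U.det, 1] with hK
  have hKK : star K * K = 1 := by
    rw [hK, star_eq_conjTranspose, diagonal_conjTranspose, diagonal_mul_diagonal,
      ← diagonal_one]
    congr 1
    funext i
    fin_cases i
    · simpa using hδ
    · simp
  have hdet : (U * K).det = 1 := by
    simpa [hK, det_diagonal, Fin.prod_univ_two] using hδ
  let v : SU2 := ⟨⟨U * K, mul_mem hU (mem_unitaryGroup_iff'.mpr hKK)⟩, hdet⟩
  refine ⟨v⁻¹, ?_⟩
  have hUU : star U * U = 1 := mem_unitaryGroup_iff'.mp hU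
  have hKe : Commute K (diagonal e) := commute_diagonal _ _
  rw [inv_inv, mat_inv]
  change star (U * K) * (U * diagonal e * star U) * (U * K) = diagonal e
  calc star (U * K) * (U * diagonal e * star U) * (U * K)
      = star K * (star U * U) * diagonal e * (star U * U) * K := by
        simp only [star_mul, mul_assoc]
    _ = diagonal e := by
        rw [hUU, mul_one, mul_one, mul_assoc, ← hKe.eq, ← mul_assoc, hKK, one_mul]

lemma exists_conj_eq_diagonal {η : M2} (hη : η ∈ su2) :
    ∃ (u : SU2) (e : Fin 2 → ℂ), mat u * η * mat u⁻¹ = diagonal e := by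
  have hH : (I • η).IsHermitian := by
    rw [IsHermitian, conjTranspose_smul, hη.1, smul_neg, star_def, conj_I, neg_smul, neg_neg]
  obtain ⟨U, e, hηU⟩ : ∃ (U : unitaryGroup (Fin 2) ℂ) (e : Fin 2 → ℂ),
      η = U * diagonal e * star (U : M2) := by
    refine ⟨hH.eigenvectorUnitary, fun i => -I * hH.eigenvalues i, ?_⟩
    have h := congrArg (fun X => -I • X) hH.spectral_theorem
    simp only [smul_smul, neg_mul, I_mul_I, neg_neg, one_smul,
      Unitary.conjStarAlgAut_apply] at h
    refine h.trans ?_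
    rw [← smul_mul_assoc, ← mul_smul_comm, ← diagonal_smul]
    rfl
  obtain ⟨u, hu⟩ := exists_conj_eq_of_unitary U.2 e
  exact ⟨u, e, hηU ▸ hu⟩

lemma exists_conj_eq_diagonal_of_ne_zero {η : M2} (hη : η ∈ su2) (hne : η ≠ 0) :
    ∃ (u : SU2) (e : Fin 2 → ℂ), e 0 ≠ e 1 ∧ mat u * η * mat u⁻¹ = diagonal e := by
  obtain ⟨u, e, hu⟩ := exists_conj_eq_diagonal hη
  refine ⟨u, e, fun he => hne ?_, hu⟩
  have htr : e 0 + e 1 = 0 := by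
    have h := congrArg trace hu
    rwa [trace_mul_cycle, mat_inv_mul_mat, one_mul, hη.2, trace_diagonal, Fin.sum_univ_two,
      eq_comm] at h
  have he0 : e 0 = 0 := by linear_combination (htr + he) / 2
  have he1 : e 1 = 0 := by linear_combination (htr - he) / 2
  have hdiag : diagonal e = 0 := by
    ext i j
    fin_cases i <;> fin_cases j <;> simp [he0, he1]
  rw [← mat_inv_conj_mat_conj u η, hu, hdiag, mul_zero, zero_mul]

lemma isDiag_of_commute_diagonal {A : M2} {e : Fin 2 → ℂ} (he : e 0 ≠ e 1)
    (h : Commute A (diagonal e)) : A.IsDiag := by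
  intro i j hij
  have hAij := congrFun (congrFun h.eq i) j
  rw [mul_diagonal, diagonal_mul] at hAij
  have hne : e j - e i ≠ 0 := by
    rw [sub_ne_zero]
    fin_cases i <;> fin_cases j
    all_goals first | exact absurd rfl hij | exact he | exact Ne.symm he
  exact (mul_eq_zero.mp (by linear_combination hAij : A i j * (e j - e i) = 0)).resolve_right hne

lemma exists_forall_isDiag_conj_iff (S : Set SU2) :
    (∃ u : SU2, ∀ g ∈ S, (mat (u * g * u⁻¹)).IsDiag) ↔
      ∃ η ∈ su2, (∀ g ∈ S, g ∈ matCentralizer η) ∧ η ≠ 0 := by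
  constructor
  · rintro ⟨u, hu⟩
    set E : M2 := diagonal ![I, -I] with hE
    have hEsu2 : E ∈ su2 := by
      constructor
      · ext i j
        fin_cases i <;> fin_cases j <;> simp [hE]
      · simp [hE, trace_diagonal]
    refine ⟨mat u⁻¹ * E * mat u, conj_inv_mem_su2 u hEsu2, fun g hg => ?_, fun h0 => ?_⟩
    · rw [mem_matCentralizer, ← commute_mat_conj_iff u, mat_conj_mat_inv_conj,
        ← (hu g hg).diagonal_diag]
      exact commute_diagonal _ _
    · have hE0 := mat_conj_mat_inv_conj u E
      rw [h0, mul_zero, zero_mul] at hE0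
      simpa [hE, eq_comm] using congrFun (congrFun hE0 0) 0
  · rintro ⟨η, hη, hS, hne⟩
    obtain ⟨u, e, he, hu⟩ := exists_conj_eq_diagonal_of_ne_zero hη hne
    refine ⟨u, fun g hg => isDiag_of_commute_diagonal he ?_⟩
    rw [← hu, commute_mat_conj_iff]
    exact hS g hg

theorem stmt_7_general (m : ℕ) (α : Fin (m+1) → ℝ)
    (a : Fin m → SU2) (b : Fin (m+1) → SU2) (hab : (a, b) ∈ NGsetW m α)
    (c : Fin m → SU2) (hc : ∀ i, c i = a i * b i.succ * (a i)⁻¹) :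
    (∀ η : M2, Issu2 η →
        ∃ ξ : Fin m → M2, (∀ i, Issu2 (ξ i)) ∧
          ∑ i : Fin m,
            mat (((List.ofFn c).take i.1).prod) *
              (ξ i - mat (c i) * ξ i * mat ((c i)⁻¹)) *
              mat ((((List.ofFn c).take i.1).prod)⁻¹) = η) ↔
      ¬ ∃ u : SU2, (mat (u * b 0 * u⁻¹)).IsDiag ∧
          ∀ i : Fin m, (mat (u * c i * u⁻¹)).IsDiag := by
  have hb : b 0 = (List.ofFn c).prod⁻¹ := by
    have h := hab.1
    simp only [NGset, Set.mem_ofPred_eq, ← hc] at h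
    exact eq_inv_of_mul_eq_one_left h
  have hsurj := forall_exists_twistedSum_eq_iff (fun i : Fin m => ((List.ofFn c).take i).prod) c
  simp only [twistedSum_apply, ← mem_matCentralizer, forall_conj_prod_take_mem_iff] at hsurj
  refine hsurj.trans ?_
  have hdiag : (∃ u : SU2, (mat (u * b 0 * u⁻¹)).IsDiag ∧ ∀ i, (mat (u * c i * u⁻¹)).IsDiag) ↔
      ∃ u : SU2, ∀ g ∈ insert (b 0) (Set.range c), (mat (u * g * u⁻¹)).IsDiag := by
    simp only [Set.forall_mem_insert, Set.forall_mem_range]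
  have hS (η : M2) : (∀ g ∈ insert (b 0) (Set.range c), g ∈ matCentralizer η) ↔
      ∀ i, c i ∈ matCentralizer η := by
    simp only [Set.forall_mem_insert, Set.forall_mem_range, and_iff_right_iff_imp, hb]
    intro h
    have hprod := prod_take_ofFn_mem _ c (k := (List.ofFn c).length) fun i _ => h i
    rw [List.take_length] at hprod
    exact inv_mem hprod
  simp only [hdiag, exists_forall_isDiag_conj_iff, hS, not_exists, not_and, not_not]

/-- the linear map `L(ξ) = Σ_i (c_2⋯c_{i-1})(ξ_i − c_i ξ_i c_i⁻¹)(c_2⋯c_{i-1})⁻¹`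
is surjective onto `su(2)` if and only if `b_1, c_2, …, c_n` do not lie on a common
maximal torus.  Here `n = m+1` and `c_i = a_i b_i a_i⁻¹`. -/
theorem stmt_7 (m : ℕ) (hm : 1 ≤ m) (α : Fin (m+1) → ℝ)
    (hα : ∀ i, α i ∈ Set.Ioo (0:ℝ) (1/2))
    (a : Fin m → SU2) (b : Fin (m+1) → SU2) (hab : (a, b) ∈ NGsetW m α)
    (c : Fin m → SU2) (hc : ∀ i, c i = a i * b i.succ * (a i)⁻¹) :
    (∀ η : M2, Issu2 η →
        ∃ ξ : Fin m → M2, (∀ i, Issu2 (ξ i)) ∧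
          ∑ i : Fin m,
            mat (((List.ofFn c).take i.1).prod) *
              (ξ i - mat (c i) * ξ i * mat ((c i)⁻¹)) *
              mat ((((List.ofFn c).take i.1).prod)⁻¹) = η) ↔
      ¬ ∃ u : SU2, (mat (u * b 0 * u⁻¹)).IsDiag ∧
          ∀ i : Fin m, (mat (u * c i * u⁻¹)).IsDiag :=
  stmt_7_general m α a b hab c hc
end
end

section
/- Let n ≥ 3 and let w = (w_1,…,w_n) ∈ ℝ_{>0}^n satisfy w_1 + ⋯ + w_n = 2, w_n < 1, and w_i + w_n > 1 for all i = 1,…,n−1. Let S be the set of (x_1,…,x_n) ∈ (ℙ¹(ℂ))^n such that for every point p ∈ ℙ¹(ℂ) one has Σ_{i : x_i = p} w_i < 1. Then (a) S equals the set of (x_1,…,x_n) such that x_i ≠ x_n for all i = 1,…,n−1 and the points x_1,…,x_{n−1} are not all equal; and (b) the quotient of S by the diagonal action of GL(2,ℂ) is in bijection with the complex projective space of dimension n−3 (the projectivization of ℂ^{n−2}). -/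
/-!
Part (a) is a weight count. A fiber containing `x_n` and some other `x_i` weighs at least
`w_i + w_n > 1`; a fiber containing all of `x_1,…,x_{n-1}` weighs `2 - w_n > 1`; any other fiber
misses `x_n` and some `x_k`, so it weighs at most `2 - w_k - w_n < 1`.

For (b), move `x_n` to `∞`. The other points become affine coordinates `z_1,…,z_{n-1} ∈ ℂ`, not all
equal, determined up to the stabilizer of `∞`, i.e. up to `z ↦ a z + b`. So the nonzero vector
`(z_i - z_{n-1})_{i ≤ n-2}` is determined up to scaling, and its class in `ℙ^{n-3}` is a complete
invariant of the orbit; every class arises.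
-/

noncomputable section

open Matrix

/-- The complex projective line, as the projectivization of `ℂ²`. -/
abbrev P1 : Type := Projectivization ℂ (Fin 2 → ℂ)

/-- The group `GL(2,ℂ)`. -/
abbrev GL2 : Type := Matrix.GeneralLinearGroup (Fin 2) ℂ

lemma glLin_injective (A : GL2) :
    Function.Injective (Matrix.toLin' (A : Matrix (Fin 2) (Fin 2) ℂ)) := by
  have h : ∀ v, Matrix.toLin' ((A⁻¹ : GL2) : Matrix (Fin 2) (Fin 2) ℂ)
      (Matrix.toLin' ((A : GL2) : Matrix (Fin 2) (Fin 2) ℂ) v) = v := by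
    intro v
    rw [← Matrix.toLin'_mul_apply, Units.inv_mul, Matrix.toLin'_one, LinearMap.id_apply]
  exact Function.LeftInverse.injective h

/-- The action of `GL(2,ℂ)` on the projective line via projectivized linear maps. -/
def glAct (A : GL2) : P1 → P1 :=
  Projectivization.map (Matrix.toLin' (A : Matrix (Fin 2) (Fin 2) ℂ)) (glLin_injective A)

lemma glAct_one (x : P1) : glAct 1 x = x := by
  induction x using Projectivization.ind with
  | h v hv => rw [glAct, Projectivization.map_mk]; simp

lemma glAct_mul (A B : GL2) (x : P1) : glAct A (glAct B x) = glAct (A * B) x := by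
  induction x using Projectivization.ind with
  | h v hv =>
    rw [glAct, glAct, glAct, Projectivization.map_mk, Projectivization.map_mk,
      Projectivization.map_mk]
    congr 1
    rw [← Matrix.toLin'_mul_apply]
    rfl

/-- The orbit equivalence for the diagonal `GL(2,ℂ)`-action on a subset of
`(ℙ¹(ℂ))^n`. -/
def glSetoid {n : ℕ} (S : Set (Fin n → P1)) : Setoid S where
  r x y := ∃ A : GL2, ∀ i, glAct A (x.1 i) = y.1 i
  iseqv := by
    constructor
    · intro x; exact ⟨1, fun i => glAct_one _⟩
    · rintro x y ⟨A, h⟩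
      refine ⟨A⁻¹, fun i => ?_⟩
      rw [← h i, glAct_mul, inv_mul_cancel, glAct_one]
    · rintro x y z ⟨A, h⟩ ⟨B, h'⟩
      refine ⟨B * A, fun i => ?_⟩
      rw [← glAct_mul, h i, h' i]
open scoped Classical in
/-- The set of `w`-stable configurations of `n` points on `ℙ¹(ℂ)`. -/
def stableSet (n : ℕ) (w : Fin n → ℝ) : Set (Fin n → P1) :=
  { x | ∀ p : P1, ∑ i ∈ Finset.univ.filter (fun i => x i = p), w i < 1 }

open Classical in
theorem fiberWeight_lt_one_iff {ι α : Type*} [Fintype ι] {w : ι → ℝ} (last : ι)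
    (hw : ∀ i, 0 < w i) (hsum : ∑ i, w i = 2) (hlast : w last < 1)
    (hbig : ∀ i, i ≠ last → 1 < w i + w last) (x : ι → α) :
    (∀ p, ∑ i ∈ Finset.univ.filter (fun i => x i = p), w i < 1) ↔
      (∀ i, i ≠ last → x i ≠ x last) ∧ ¬ ∀ i j, i ≠ last → j ≠ last → x i = x j := by
  have sum_mono {s t : Finset ι} (h : s ⊆ t) : ∑ k ∈ s, w k ≤ ∑ k ∈ t, w k :=
    Finset.sum_le_sum_of_subset_of_nonneg h fun k _ _ => (hw k).le
  have pair_le {s : Finset ι} {i : ι} (hi : i ≠ last) (hs : {i, last} ⊆ s) :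
      w i + w last ≤ ∑ k ∈ s, w k :=
    Finset.sum_pair (f := w) hi ▸ sum_mono hs
  have fiber_add_compl (p : α) : ∑ i ∈ Finset.univ.filter (fun i => x i = p), w i +
      ∑ i ∈ Finset.univ.filter (fun i => x i ≠ p), w i = 2 := by
    rw [← hsum, Finset.sum_filter_add_sum_filter_not]
  constructor
  · intro hst
    refine ⟨fun i hi hxi => ?_, fun hall => ?_⟩
    · have := pair_le (s := Finset.univ.filter (fun k => x k = x last)) hi (by
        simp [Finset.insert_subset_iff, hxi])
      linarith [hst (x last), hbig i hi]
    · obtain ⟨i, hi⟩ : ∃ i, i ≠ last := by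
        by_contra! h
        linarith [Fintype.sum_eq_single (f := w) last fun i hi => absurd (h i) hi]
      have hcompl : Finset.univ.filter (fun k => x k ≠ x i) ⊆ {last} := fun k hk => by
        by_contra hk'
        exact (Finset.mem_filter.1 hk).2 (hall k i (by simpa using hk') hi)
      have := Finset.sum_singleton w last ▸ sum_mono hcompl
      linarith [hst (x i), fiber_add_compl (x i)]
  · rintro ⟨hne, hnall⟩ p
    by_cases hp : p = x last
    · subst hp
      have hfiber : Finset.univ.filter (fun k => x k = x last) ⊆ {last} := fun k hk => by
        by_contra hk'
        exact hne k (by simpa using hk') (Finset.mem_filter.1 hk).2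
      linarith [Finset.sum_singleton w last ▸ sum_mono hfiber]
    · obtain ⟨k, hk, hkp⟩ : ∃ k, k ≠ last ∧ x k ≠ p := by
        push Not at hnall
        obtain ⟨i, j, hi, hj, hij⟩ := hnall
        by_cases hip : x i = p
        · exact ⟨j, hj, fun hjp => hij (hip.trans hjp.symm)⟩
        · exact ⟨i, hi, hip⟩
      have := pair_le (s := Finset.univ.filter (fun k => x k ≠ p)) hk (by
        simp [Finset.insert_subset_iff, hkp, Ne.symm hp])
      linarith [fiber_add_compl p, hbig k hk]

theorem Quotient.exists_bijective_of_complete_invariant {α β : Type*} (s : Setoid α)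
    (R : α → β → Prop) (hex : ∀ a, ∃ b, R a b) (hsurj : ∀ b, ∃ a, R a b)
    (hR : ∀ a a' b b', R a b → R a' b' → (s.r a a' ↔ b = b')) :
    ∃ f : Quotient s → β, Function.Bijective f := by
  choose f hf using hex
  refine ⟨Quotient.lift f fun a a' h => (hR a a' _ _ (hf a) (hf a')).1 h, ?_, ?_⟩
  · rintro ⟨a⟩ ⟨a'⟩ h
    exact Quotient.sound ((hR a a' _ _ (hf a) (hf a')).2 h)
  · intro b
    obtain ⟨a, ha⟩ := hsurj b
    exact ⟨⟦a⟧, (hR a a _ _ (hf a) ha).1 (s.refl a)⟩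

def affinePt (z : ℂ) : P1 :=
  Projectivization.mk ℂ ![z, 1] fun h => by simpa using congrFun h 1

def infinity : P1 :=
  Projectivization.mk ℂ ![1, 0] fun h => by simpa using congrFun h 0

theorem affinePt_injective : Function.Injective affinePt := by
  intro a b h
  obtain ⟨c, hc⟩ := (Projectivization.mk_eq_mk_iff' ℂ _ _ _ _).1 h
  have h1 : c = 1 := by simpa using congrFun hc 1
  simpa [h1] using (congrFun hc 0).symm

theorem affinePt_ne_infinity (z : ℂ) : affinePt z ≠ infinity := fun h => by
  obtain ⟨c, hc⟩ := (Projectivization.mk_eq_mk_iff' ℂ _ _ _ _).1 h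
  simpa using congrFun hc 1

theorem exists_affinePt_of_ne_infinity {p : P1} (hp : p ≠ infinity) : ∃ z, p = affinePt z := by
  induction p using Projectivization.ind with
  | h v hv =>
    have hv1 : v 1 ≠ 0 := fun hv1 => hp <|
      (Projectivization.mk_eq_mk_iff' ℂ _ _ _ _).2 ⟨v 0, by ext i; fin_cases i <;> simp [hv1]⟩
    refine ⟨v 0 / v 1, (Projectivization.mk_eq_mk_iff' ℂ _ _ _ _).2 ⟨v 1, ?_⟩⟩
    ext i; fin_cases i <;> simp [mul_div_cancel₀ _ hv1]

theorem glAct_mk (A : GL2) (v : Fin 2 → ℂ) (hv : v ≠ 0) :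
    glAct A (Projectivization.mk ℂ v hv) =
      Projectivization.mk ℂ ((A : Matrix (Fin 2) (Fin 2) ℂ) *ᵥ v)
        (fun h => hv (glLin_injective A (by rwa [map_zero, Matrix.toLin'_apply]))) := by
  rw [glAct, Projectivization.map_mk]
  rfl

theorem glAct_inv_glAct (A : GL2) (p : P1) : glAct A⁻¹ (glAct A p) = p := by
  rw [glAct_mul, inv_mul_cancel, glAct_one]

theorem glAct_inv_eq_of_glAct_eq {A : GL2} {p q : P1} (h : glAct A p = q) :
    glAct A⁻¹ q = p :=
  h ▸ glAct_inv_glAct A p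

theorem glAct_injective (A : GL2) : Function.Injective (glAct A) :=
  Function.LeftInverse.injective (glAct_inv_glAct A)

theorem exists_glAct_eq_infinity (p : P1) : ∃ A : GL2, glAct A p = infinity := by
  induction p using Projectivization.ind with
  | h v hv =>
    by_cases h0 : v 0 = 0
    · have h1 : v 1 ≠ 0 := fun h1 => hv (by ext i; fin_cases i <;> simp [h0, h1])
      refine ⟨.mkOfDetNeZero !![0, 1; 1, 0] (by simp [Matrix.det_fin_two_of]), ?_⟩
      rw [glAct_mk]
      refine (Projectivization.mk_eq_mk_iff' ℂ _ _ _ _).2 ⟨v 1, ?_⟩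
      ext i; fin_cases i <;> simp [Matrix.mulVec, dotProduct, Fin.sum_univ_two, h0]
    · refine ⟨.mkOfDetNeZero !![1, 0; -v 1, v 0] (by simp [Matrix.det_fin_two_of, h0]), ?_⟩
      rw [glAct_mk]
      refine (Projectivization.mk_eq_mk_iff' ℂ _ _ _ _).2 ⟨v 0, ?_⟩
      ext i; fin_cases i <;> simp [Matrix.mulVec, dotProduct, Fin.sum_univ_two]; ring

def affineGL (a b : ℂ) (ha : a ≠ 0) : GL2 :=
  .mkOfDetNeZero !![a, b; 0, 1] (by simp [Matrix.det_fin_two_of, ha])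

theorem glAct_affineGL_affinePt (a b z : ℂ) (ha : a ≠ 0) :
    glAct (affineGL a b ha) (affinePt z) = affinePt (a * z + b) := by
  rw [affinePt, affinePt, glAct_mk]
  refine (Projectivization.mk_eq_mk_iff' ℂ _ _ _ _).2 ⟨1, ?_⟩
  ext i; fin_cases i <;> simp [affineGL, Matrix.mulVec, dotProduct, Fin.sum_univ_two]

theorem glAct_affineGL_infinity (a b : ℂ) (ha : a ≠ 0) :
    glAct (affineGL a b ha) infinity = infinity := by
  rw [infinity, glAct_mk]
  refine (Projectivization.mk_eq_mk_iff' ℂ _ _ _ _).2 ⟨a, ?_⟩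
  ext i; fin_cases i <;> simp [affineGL, Matrix.mulVec, dotProduct, Fin.sum_univ_two]

theorem exists_affine_of_glAct_infinity {C : GL2} (h : glAct C infinity = infinity) :
    ∃ a b : ℂ, ∀ z, glAct C (affinePt z) = affinePt (a * z + b) := by
  rw [infinity, glAct_mk] at h
  obtain ⟨c, hc⟩ := (Projectivization.mk_eq_mk_iff' ℂ _ _ _ _).1 h
  have hC10 : (C : Matrix (Fin 2) (Fin 2) ℂ) 1 0 = 0 := by
    simpa [Matrix.mulVec, dotProduct, Fin.sum_univ_two] using (congrFun hc 1).symm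
  have hC11 : (C : Matrix (Fin 2) (Fin 2) ℂ) 1 1 ≠ 0 := by
    intro hC11
    have hdet := ((Matrix.isUnit_iff_isUnit_det _).1 C.isUnit).ne_zero
    simp [Matrix.det_fin_two, hC10, hC11] at hdet
  refine ⟨(C : Matrix (Fin 2) (Fin 2) ℂ) 0 0 / (C : Matrix (Fin 2) (Fin 2) ℂ) 1 1,
    (C : Matrix (Fin 2) (Fin 2) ℂ) 0 1 / (C : Matrix (Fin 2) (Fin 2) ℂ) 1 1, fun z => ?_⟩
  rw [affinePt, affinePt, glAct_mk]
  refine (Projectivization.mk_eq_mk_iff' ℂ _ _ _ _).2 ⟨(C : Matrix (Fin 2) (Fin 2) ℂ) 1 1, ?_⟩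
  ext i; fin_cases i <;> simp [Matrix.mulVec, dotProduct, Fin.sum_univ_two, hC10]
  field_simp

section AffineInvariant

variable {n : ℕ} (hn : 3 ≤ n)

def lastIdx : Fin n := ⟨n - 1, Nat.sub_one_lt (by omega)⟩

def refIdx : Fin n := ⟨n - 2, by omega⟩

/-- Up to scaling, a complete invariant of `z` away from the index `n - 1` under the affine
maps `z ↦ a z + b`. -/
def diffVec (z : Fin n → ℂ) : Fin (n - 2) → ℂ :=
  fun j => z (Fin.castLE (by omega) j) - z (refIdx hn)

variable {hn}

theorem refIdx_ne_lastIdx : refIdx hn ≠ lastIdx hn := by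
  simp only [ne_eq, Fin.ext_iff, refIdx, lastIdx]; omega

theorem castLE_ne_lastIdx (j : Fin (n - 2)) : Fin.castLE (by omega) j ≠ lastIdx hn := by
  simp only [ne_eq, Fin.ext_iff, Fin.val_castLE, lastIdx]; omega

theorem sub_refIdx_eq_of_diffVec_eq_smul {z z' : Fin n → ℂ} {a : ℂ}
    (h : diffVec hn z' = a • diffVec hn z) {i : Fin n} (hi : i ≠ lastIdx hn) :
    z' i - z' (refIdx hn) = a * (z i - z (refIdx hn)) := by
  by_cases hr : i = refIdx hn
  · simp [hr]
  · have hi' : i.1 < n - 2 := by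
      have := i.2
      simp only [ne_eq, Fin.ext_iff, lastIdx, refIdx] at hi hr
      omega
    exact congrFun h ⟨i, hi'⟩

theorem diffVec_affine (z : Fin n → ℂ) (a b : ℂ) :
    diffVec hn (fun i => a * z i + b) = a • diffVec hn z := by
  ext j; simp only [diffVec, Pi.smul_apply, smul_eq_mul]; ring

variable (hn)

/-- A relation rather than a function because the normalizing `A` and coordinates `z` are not
unique; `IsAffineInvariant.orbit_iff` shows that `q` does not depend on the choice. -/
def IsAffineInvariant (x : Fin n → P1) (q : Projectivization ℂ (Fin (n - 2) → ℂ)) : Prop :=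
  ∃ (A : GL2) (z : Fin n → ℂ) (hz : diffVec hn z ≠ 0),
    glAct A (x (lastIdx hn)) = infinity ∧
    (∀ i, i ≠ lastIdx hn → glAct A (x i) = affinePt (z i)) ∧
    q = Projectivization.mk ℂ (diffVec hn z) hz

variable {hn}

theorem exists_isAffineInvariant {x : Fin n → P1}
    (hne : ∀ i, i ≠ lastIdx hn → x i ≠ x (lastIdx hn))
    (hnall : ¬ ∀ i j, i ≠ lastIdx hn → j ≠ lastIdx hn → x i = x j) :
    ∃ q, IsAffineInvariant hn x q := by
  obtain ⟨A, hA⟩ := exists_glAct_eq_infinity (x (lastIdx hn))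
  have hz (i : Fin n) : ∃ z, i ≠ lastIdx hn → glAct A (x i) = affinePt z := by
    by_cases hi : i = lastIdx hn
    · exact ⟨0, fun h => absurd hi h⟩
    · obtain ⟨z, hz⟩ := exists_affinePt_of_ne_infinity
        (hA ▸ (glAct_injective A).ne (hne i hi) : glAct A (x i) ≠ infinity)
      exact ⟨z, fun _ => hz⟩
  choose z hz using hz
  have hdiff : diffVec hn z ≠ 0 := by
    refine fun h0 => hnall fun i j hi hj => glAct_injective A ?_
    have hconst (k : Fin n) (hk : k ≠ lastIdx hn) : z k = z (refIdx hn) := by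
      simpa [sub_eq_zero] using
        sub_refIdx_eq_of_diffVec_eq_smul (z := z) (z' := z) (a := 0) (by simp [h0]) hk
    rw [hz i hi, hz j hj, hconst i hi, hconst j hj]
  exact ⟨_, A, z, hdiff, hA, hz, rfl⟩

theorem IsAffineInvariant.ne_last_and_not_all_eq {x : Fin n → P1} {q}
    (h : IsAffineInvariant hn x q) :
    (∀ i, i ≠ lastIdx hn → x i ≠ x (lastIdx hn)) ∧
      ¬ ∀ i j, i ≠ lastIdx hn → j ≠ lastIdx hn → x i = x j := by
  obtain ⟨A, z, hdiff, hA, hz, -⟩ := h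
  refine ⟨fun i hi hxi => affinePt_ne_infinity (z i) (by rw [← hz i hi, hxi, hA]),
    fun hall => hdiff ?_⟩
  ext j
  have hj := castLE_ne_lastIdx (hn := hn) j
  simp only [diffVec, Pi.zero_apply, sub_eq_zero]
  exact affinePt_injective (by
    rw [← hz _ hj, ← hz _ refIdx_ne_lastIdx, hall _ _ hj refIdx_ne_lastIdx])

theorem exists_isAffineInvariant_of_vec (q : Projectivization ℂ (Fin (n - 2) → ℂ)) :
    ∃ x, IsAffineInvariant hn x q := by
  induction q using Projectivization.ind with
  | h u hu =>
    let z : Fin n → ℂ := fun i => if h : i.1 < n - 2 then u ⟨i, h⟩ else 0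
    have hzu : diffVec hn z = u := by
      ext j; simp [diffVec, z, refIdx]
    refine ⟨fun i => if i = lastIdx hn then infinity else affinePt (z i), 1, z, hzu ▸ hu,
      by simp [glAct_one], fun i hi => by simp [glAct_one, hi], ?_⟩
    simp_rw [hzu]

theorem IsAffineInvariant.orbit_iff {x y : Fin n → P1} {q q'}
    (hx : IsAffineInvariant hn x q) (hy : IsAffineInvariant hn y q') :
    (∃ B : GL2, ∀ i, glAct B (x i) = y i) ↔ q = q' := by
  obtain ⟨A, z, _, hA, hz, rfl⟩ := hx
  obtain ⟨A', z', _, hA', hz', rfl⟩ := hy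
  constructor
  · rintro ⟨B, hB⟩
    -- `A' B A⁻¹` fixes `∞`, hence acts on the affine coordinates by some `z ↦ a z + b`
    obtain ⟨a, b, hab⟩ := exists_affine_of_glAct_infinity (C := A' * B * A⁻¹) (by
      rw [← glAct_mul, ← glAct_mul, glAct_inv_eq_of_glAct_eq hA, hB, hA'])
    have hz'z : ∀ i, i ≠ lastIdx hn → z' i = a * z i + b := fun i hi =>
      affinePt_injective (by rw [← hz' i hi, ← hab, ← hz i hi, ← glAct_mul, glAct_inv_glAct,
        ← glAct_mul, hB])
    have hdiff'_eq : diffVec hn z' = a • diffVec hn z := by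
      rw [← diffVec_affine z a b]
      ext j
      simp only [diffVec, hz'z _ (castLE_ne_lastIdx j), hz'z _ refIdx_ne_lastIdx]
    exact ((Projectivization.mk_eq_mk_iff' ℂ _ _ _ _).2 ⟨a, hdiff'_eq.symm⟩).symm
  · intro hq
    obtain ⟨c, hc⟩ := (Projectivization.mk_eq_mk_iff ℂ _ _ _ _).1 hq.symm
    set b := z' (refIdx hn) - c * z (refIdx hn)
    have hz'z (i : Fin n) (hi : i ≠ lastIdx hn) : z' i = c * z i + b := by
      linear_combination sub_refIdx_eq_of_diffVec_eq_smul hc.symm hi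
    refine ⟨A'⁻¹ * affineGL c b c.ne_zero * A, fun i => ?_⟩
    rw [← glAct_mul, ← glAct_mul]
    by_cases hi : i = lastIdx hn
    · rw [hi, hA, glAct_affineGL_infinity, glAct_inv_eq_of_glAct_eq hA']
    · rw [hz i hi, glAct_affineGL_affinePt, ← hz'z i hi, glAct_inv_eq_of_glAct_eq (hz' i hi)]

end AffineInvariant

/-- for `w` in the chamber `w_n < 1`, `w_i + w_n > 1`, the stable set
consists of the configurations with `x_i ≠ x_n` and not all of `x_1,…,x_{n-1}` equal,
and its `GL(2,ℂ)`-quotient is in bijection with `ℙ^{n-3}`. -/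
theorem stmt_10 (n : ℕ) (hn : 3 ≤ n) (w : Fin n → ℝ) (hw : ∀ i, 0 < w i)
    (hsum : ∑ i, w i = 2)
    (hlast : w ⟨n-1, by omega⟩ < 1)
    (hbig : ∀ i : Fin n, i ≠ ⟨n-1, by omega⟩ → 1 < w i + w ⟨n-1, by omega⟩) :
    stableSet n w =
      { x : Fin n → P1 |
        (∀ i : Fin n, i ≠ ⟨n-1, by omega⟩ → x i ≠ x ⟨n-1, by omega⟩) ∧
        ¬ (∀ i j : Fin n, i ≠ (⟨n-1, by omega⟩ : Fin n) → j ≠ (⟨n-1, by omega⟩ : Fin n) →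
            x i = x j) } ∧
    ∃ f : Quotient (glSetoid (stableSet n w)) → Projectivization ℂ (Fin (n-2) → ℂ),
      Function.Bijective f := by
  have hstable : stableSet n w = {x | (∀ i, i ≠ lastIdx hn → x i ≠ x (lastIdx hn)) ∧
      ¬ ∀ i j, i ≠ lastIdx hn → j ≠ lastIdx hn → x i = x j} :=
    Set.ext (fiberWeight_lt_one_iff (lastIdx hn) hw hsum hlast hbig)
  refine ⟨hstable, Quotient.exists_bijective_of_complete_invariant _
    (fun x q => IsAffineInvariant hn x.1 q) ?_ ?_ fun x y q q' hx hy => hx.orbit_iff hy⟩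
  · rintro ⟨x, hx⟩
    rw [hstable] at hx
    exact exists_isAffineInvariant hx.1 hx.2
  · intro q
    obtain ⟨x, hx⟩ := exists_isAffineInvariant_of_vec q
    exact ⟨⟨x, hstable ▸ hx.ne_last_and_not_all_eq⟩, hx⟩
end
end

section
/- Let n ≥ 4 and let α ∈ ℝ_{>0}^n. Define Φ on {(x_1,…,x_n) ∈ (ℝ³)^n : ‖x_i‖ = α_i for all i and x_1 + ⋯ + x_n = 0} with values in ℝ^{n−3} by Φ(x)_k = ‖x_1 + ⋯ + x_{k+1}‖ for k = 1,…,n−3. Then the image of Φ equals the set of (u_1,…,u_{n−3}) ∈ ℝ^{n−3} such that, setting u_0 := α_1 and u_{n−2} := α_n, the inequalities |u_{k−1} − α_{k+1}| ≤ u_k ≤ u_{k−1} + α_{k+1} hold for all k = 1,…,n−2. -/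
/-!
Write `wⱼ = x₁ + ⋯ + xⱼ` for the vertices of a closed polygon, so `w₀ = wₙ = 0` and
`Φ(x)ₖ = ‖wₖ₊₁‖`. Since `wⱼ₊₁ - wⱼ = xⱼ₊₁` has length `αⱼ₊₁`, the triangle inequality for
`0, wⱼ, wⱼ₊₁` gives the inequalities. Conversely, numbers satisfying them are realised by choosing
the vertices one at a time: over any segment `[0, wⱼ]` in `ℝ³` a triangle with prescribed
admissible side lengths can be erected, using a unit vector orthogonal to `wⱼ`.
-/

noncomputable section

open Matrix Complex Real

/-- Euclidean three-space. -/
abbrev R3 : Type := EuclideanSpace ℝ (Fin 3)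

/-- The space of closed `n`-gons in `ℝ³` with side lengths `α`. -/
def polygonSet {n : ℕ} (α : Fin n → ℝ) : Set (Fin n → R3) :=
  { x | (∀ i, ‖x i‖ = α i) ∧ ∑ i, x i = 0 }

/-- The weight attached to the label `j ∈ {1,…,n}` (label `j` is `α_j`). -/
def wlab {n : ℕ} (α : Fin n → ℝ) (j : ℕ) : ℝ :=
  if h : j - 1 < n then α ⟨j - 1, h⟩ else 0

/-- The sequence `u_0 = α_1, u_1, …, u_{n-3}, u_{n-2} = α_n` extending a point
`v ∈ ℝ^{n-3}`. -/
def extSeq {n : ℕ} (α : Fin n → ℝ) (v : Fin (n-3) → ℝ) (j : ℕ) : ℝ :=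
  if j = 0 then wlab α 1
  else if j = n - 2 then wlab α n
  else if h : j - 1 < n - 3 then v ⟨j - 1, h⟩ else 0

open Module
open scoped RealInnerProductSpace

section InnerProductSpace

variable {E : Type*} [NormedAddCommGroup E] [InnerProductSpace ℝ E]

theorem exists_norm_eq_one_inner_eq_zero (hE : 2 ≤ finrank ℝ E) (p : E) :
    ∃ e : E, ‖e‖ = 1 ∧ ⟪p, e⟫ = 0 := by
  have : FiniteDimensional ℝ E := Module.finite_of_finrank_pos (by omega)
  have hspan : finrank ℝ (ℝ ∙ p) ≤ 1 := by
    simpa using finrank_span_le_card (R := ℝ) ({p} : Set E)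
  have hperp : (ℝ ∙ p)ᗮ ≠ ⊥ := by
    intro h
    have := (ℝ ∙ p).finrank_add_finrank_orthogonal
    rw [h, finrank_bot] at this
    omega
  obtain ⟨y, hy, hy0⟩ := Submodule.exists_mem_ne_zero_of_ne_bot hperp
  refine ⟨‖y‖⁻¹ • y, norm_smul_inv_norm hy0, ?_⟩
  rw [inner_smul_right, Submodule.mem_orthogonal_singleton_iff_inner_right.1 hy, mul_zero]

theorem norm_smul_add_smul_of_orthonormal {f e : E} (hf : ‖f‖ = 1) (he : ‖e‖ = 1)
    (hfe : ⟪f, e⟫ = 0) (x y : ℝ) : ‖x • f + y • e‖ ^ 2 = x ^ 2 + y ^ 2 := by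
  have h := norm_add_sq_eq_norm_sq_add_norm_sq_real
    (x := x • f) (y := y • e) (by rw [inner_smul_left, inner_smul_right, hfe]; simp)
  rw [sq, h, norm_smul, norm_smul, hf, he, Real.norm_eq_abs, Real.norm_eq_abs]
  nlinarith [sq_abs x, sq_abs y]

theorem exists_norm_eq_norm_sub_eq (hE : 2 ≤ finrank ℝ E) (p : E) {b c : ℝ}
    (h₁ : |‖p‖ - c| ≤ b) (h₂ : b ≤ ‖p‖ + c) : ∃ q : E, ‖q‖ = b ∧ ‖q - p‖ = c := by
  obtain ⟨e, he, hpe⟩ := exists_norm_eq_one_inner_eq_zero hE p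
  set a := ‖p‖ with ha
  have hb : 0 ≤ b := (abs_nonneg _).trans h₁
  have hc : 0 ≤ c := by linarith [le_abs_self (a - c)]
  obtain hp | hp := eq_or_ne p 0
  · have ha0 : a = 0 := by rw [ha, hp, norm_zero]
    rw [ha0, zero_sub, abs_neg, abs_of_nonneg hc] at h₁
    refine ⟨c • e, ?_, ?_⟩
    · rw [norm_smul, he, mul_one, Real.norm_of_nonneg hc]
      linarith
    · rw [hp, sub_zero, norm_smul, he, mul_one, Real.norm_of_nonneg hc]
  have ha0 : 0 < a := norm_pos_iff.2 hp
  set f := a⁻¹ • p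
  have hf : ‖f‖ = 1 := norm_smul_inv_norm hp
  have hfe : ⟪f, e⟫ = 0 := by rw [inner_smul_left, hpe, mul_zero]
  have hpf : p = a • f := by rw [smul_smul, mul_inv_cancel₀ ha0.ne', one_smul]
  -- law of cosines: `s` is the component of `q` along `p / ‖p‖`
  set s := (a ^ 2 + b ^ 2 - c ^ 2) / (2 * a)
  have hs : 2 * a * s = a ^ 2 + b ^ 2 - c ^ 2 := mul_div_cancel₀ _ (by positivity)
  have hsb : s ^ 2 ≤ b ^ 2 := by
    rw [abs_le] at h₁
    have h : (2 * a) ^ 2 * s ^ 2 ≤ (2 * a) ^ 2 * b ^ 2 := by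
      rw [← mul_pow, hs]
      -- Heron: `(2ab)² - (a² + b² - c²)² = (a + b - c)(a + b + c)(c + a - b)(c - a + b)`
      nlinarith [mul_nonneg (mul_nonneg (by linarith : (0:ℝ) ≤ a + b - c)
        (by linarith : (0:ℝ) ≤ a + b + c)) (mul_nonneg (by linarith : (0:ℝ) ≤ c + a - b)
        (by linarith : (0:ℝ) ≤ c - a + b))]
    exact le_of_mul_le_mul_left h (by positivity)
  set t := Real.sqrt (b ^ 2 - s ^ 2)
  have ht : t ^ 2 = b ^ 2 - s ^ 2 := Real.sq_sqrt (by linarith)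
  refine ⟨s • f + t • e, ?_, ?_⟩
  · rw [← sq_eq_sq₀ (norm_nonneg _) hb, norm_smul_add_smul_of_orthonormal hf he hfe, ht]
    ring
  · rw [← sq_eq_sq₀ (norm_nonneg _) hc, hpf,
      show s • f + t • e - a • f = (s - a) • f + t • e by module,
      norm_smul_add_smul_of_orthonormal hf he hfe, ht]
    nlinarith [hs]

theorem exists_seq_norm_eq_norm_sub_eq (hE : 2 ≤ finrank ℝ E) {u β : ℕ → ℝ} {p₀ : E}
    (hp₀ : ‖p₀‖ = u 0) (m : ℕ)
    (h : ∀ k < m, |u k - β k| ≤ u (k + 1) ∧ u (k + 1) ≤ u k + β k) :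
    ∃ q : ℕ → E, q 0 = p₀ ∧ (∀ j ≤ m, ‖q j‖ = u j) ∧ ∀ k < m, ‖q (k + 1) - q k‖ = β k := by
  induction m with
  | zero =>
    exact ⟨fun _ => p₀, rfl, fun j hj => by rwa [Nat.le_zero.1 hj],
      fun k hk => absurd hk k.not_lt_zero⟩
  | succ m ih =>
    obtain ⟨q, hq0, hqu, hqβ⟩ := ih fun k hk => h k (by omega)
    obtain ⟨hm₁, hm₂⟩ := h m m.lt_succ_self
    rw [← hqu m le_rfl] at hm₁ hm₂
    obtain ⟨r, hru, hrβ⟩ := exists_norm_eq_norm_sub_eq hE (q m) hm₁ hm₂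
    refine ⟨Function.update q (m + 1) r, ?_, fun j hj => ?_, fun k hk => ?_⟩
    · rwa [Function.update_of_ne m.succ_ne_zero.symm]
    · obtain hj | rfl := Nat.lt_or_eq_of_le hj
      · rw [Function.update_of_ne (by omega)]
        exact hqu j (by omega)
      · rwa [Function.update_self]
    · obtain hk | rfl := Nat.lt_succ_iff_lt_or_eq.1 hk
      · rw [Function.update_of_ne (by omega), Function.update_of_ne (by omega)]
        exact hqβ k hk
      · rwa [Function.update_self, Function.update_of_ne (by omega)]

end InnerProductSpace

section Polygon

variable {n : ℕ} {M : Type*} [AddCommMonoid M]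

def polygonVertex (x : Fin n → M) (j : ℕ) : M :=
  ∑ i ∈ Finset.univ.filter (fun i : Fin n => i.1 < j), x i

theorem polygonVertex_zero (x : Fin n → M) :
    polygonVertex x 0 = 0 := by
  simp [polygonVertex]

theorem polygonVertex_succ (x : Fin n → M) {j : ℕ} (hj : j < n) :
    polygonVertex x (j + 1) = polygonVertex x j + x ⟨j, hj⟩ := by
  have : Finset.univ.filter (fun i : Fin n => i.1 < j + 1)
      = insert ⟨j, hj⟩ (Finset.univ.filter (fun i : Fin n => i.1 < j)) := by
    ext i
    simp [Fin.ext_iff]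
    omega
  rw [polygonVertex, this, Finset.sum_insert (by simp), add_comm]
  rfl

theorem polygonVertex_self (x : Fin n → M) :
    polygonVertex x n = ∑ i, x i := by
  simp [polygonVertex]

theorem polygonVertex_sub {G : Type*} [AddCommGroup G] (w : ℕ → G) {j : ℕ} (hj : j ≤ n) :
    polygonVertex (fun i : Fin n => w (i + 1) - w i) j = w j - w 0 := by
  induction j with
  | zero => rw [polygonVertex_zero, sub_self]
  | succ j ih =>
    rw [polygonVertex_succ _ hj, ih (by omega)]
    abel

end Polygon

theorem exists_closed_polygon {E : Type*} [NormedAddCommGroup E] [InnerProductSpace ℝ E]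
    (hE : 2 ≤ finrank ℝ E) {n : ℕ} {d β : ℕ → ℝ} (hd₀ : d 0 = 0) (hdn : d n = 0)
    (h : ∀ j < n, |d j - β j| ≤ d (j + 1) ∧ d (j + 1) ≤ d j + β j) :
    ∃ x : Fin n → E, (∀ i, ‖x i‖ = β i) ∧ ∑ i, x i = 0 ∧
      ∀ j ≤ n, ‖polygonVertex x j‖ = d j := by
  obtain ⟨w, hw₀, hwd, hwβ⟩ :=
    exists_seq_norm_eq_norm_sub_eq hE (p₀ := (0 : E)) (by rw [norm_zero, hd₀]) n h
  have hvert (j : ℕ) (hj : j ≤ n) :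
      polygonVertex (fun i : Fin n => w (i + 1) - w i) j = w j := by
    rw [polygonVertex_sub w hj, hw₀, sub_zero]
  refine ⟨fun i => w (i + 1) - w i, fun i => hwβ i i.2, ?_,
    fun j hj => by rw [hvert j hj, hwd j hj]⟩
  rw [← polygonVertex_self, hvert n le_rfl, ← norm_eq_zero, hwd n le_rfl, hdn]

section Caterpillar

variable {n : ℕ} (α : Fin n → ℝ) (v : Fin (n - 3) → ℝ)

theorem wlab_succ {k : ℕ} (hk : k < n) : wlab α (k + 1) = α ⟨k, hk⟩ := by
  simp [wlab, hk]

theorem extSeq_zero (hn : 0 < n) : extSeq α v 0 = α ⟨0, hn⟩ := by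
  simp [extSeq, wlab, hn]

theorem extSeq_sub_two (hn : 3 ≤ n) : extSeq α v (n - 2) = α ⟨n - 1, by omega⟩ := by
  rw [extSeq, if_neg (by omega), if_pos rfl, wlab, dif_pos (by omega)]

theorem extSeq_succ {k : ℕ} (hk : k < n - 3) : extSeq α v (k + 1) = v ⟨k, hk⟩ := by
  rw [extSeq, if_neg k.succ_ne_zero, if_neg (by omega), Nat.add_sub_cancel, dif_pos hk]

/-- `diagonalLength α v j` is the prescribed value of `‖x₁ + ⋯ + xⱼ‖`: it extends `extSeq α v`
(shifted by one) by the degenerate diagonals of length `0` at `j = 0` and `j = n`. -/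
def diagonalLength (j : ℕ) : ℝ :=
  if j = 0 ∨ n ≤ j then 0 else extSeq α v (j - 1)

theorem diagonalLength_zero : diagonalLength α v 0 = 0 := by
  simp [diagonalLength]

theorem diagonalLength_self : diagonalLength α v n = 0 := by
  simp [diagonalLength]

theorem diagonalLength_succ {k : ℕ} (hk : k + 1 < n) :
    diagonalLength α v (k + 1) = extSeq α v k := by
  simp [diagonalLength, hk.not_ge]

theorem diagonalLength_one (hn : 1 < n) : diagonalLength α v 1 = α ⟨0, by omega⟩ := by
  rw [diagonalLength_succ α v hn, extSeq_zero]

theorem diagonalLength_sub_one (hn : 3 ≤ n) :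
    diagonalLength α v (n - 1) = α ⟨n - 1, by omega⟩ := by
  have h := diagonalLength_succ α v (k := n - 2) (by omega)
  rwa [show n - 2 + 1 = n - 1 by omega, extSeq_sub_two α v hn] at h

theorem diagonalLength_add_two {k : ℕ} (hk : k < n - 3) :
    diagonalLength α v (k + 2) = v ⟨k, hk⟩ := by
  rw [diagonalLength_succ α v (by omega), extSeq_succ]

theorem forall_triangle_extSeq_iff (hn : 3 ≤ n) (hα : ∀ i, 0 ≤ α i) :
    (∀ k : ℕ, 1 ≤ k → k ≤ n - 2 →
      |extSeq α v (k - 1) - wlab α (k + 1)| ≤ extSeq α v k ∧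
        extSeq α v k ≤ extSeq α v (k - 1) + wlab α (k + 1)) ↔
    ∀ j < n, |diagonalLength α v j - wlab α (j + 1)| ≤ diagonalLength α v (j + 1) ∧
        diagonalLength α v (j + 1) ≤ diagonalLength α v j + wlab α (j + 1) := by
  constructor
  · intro h j hj
    obtain rfl | hj₀ := Nat.eq_zero_or_pos j
    · rw [diagonalLength_zero, diagonalLength_one α v (by omega), wlab_succ α hj]
      simp [abs_of_nonneg (hα _)]
    obtain rfl | hjn := eq_or_ne j (n - 1)
    · rw [wlab_succ α hj, Nat.sub_add_cancel (by omega), diagonalLength_self,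
        diagonalLength_sub_one α v hn]
      simpa using hα _
    obtain ⟨k, rfl⟩ := Nat.exists_eq_add_of_lt hj₀
    rw [diagonalLength_succ α v (by omega), diagonalLength_succ α v (by omega)]
    simpa using h (k + 1) (by omega) (by omega)
  · intro h k hk₁ hk₂
    obtain ⟨j, rfl⟩ := Nat.exists_eq_add_of_le' hk₁
    simpa [diagonalLength_succ α v (show j + 1 < n by omega),
      diagonalLength_succ α v (show j + 1 + 1 < n by omega)] using h (j + 1) (by omega)

end Caterpillar

theorem diagonalLength_polygonVertex {E : Type*} [SeminormedAddCommGroup E] {n : ℕ}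
    (hn : 3 ≤ n) {α : Fin n → ℝ} {x : Fin n → E} (hxα : ∀ i, ‖x i‖ = α i) (hx₀ : ∑ i, x i = 0)
    {j : ℕ} (hj : j ≤ n) :
    diagonalLength α (fun k : Fin (n - 3) => ‖polygonVertex x (k + 2)‖) j
      = ‖polygonVertex x j‖ := by
  obtain rfl | hj₀ := Nat.eq_zero_or_pos j
  · rw [diagonalLength_zero, polygonVertex_zero, norm_zero]
  obtain rfl | hjn := eq_or_ne j n
  · rw [diagonalLength_self, polygonVertex_self, hx₀, norm_zero]
  obtain rfl | hj₁ := eq_or_ne j (n - 1)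
  · have h := polygonVertex_succ x (j := n - 1) (by omega)
    rw [Nat.sub_add_cancel (by omega), polygonVertex_self, hx₀, eq_comm,
      add_eq_zero_iff_eq_neg] at h
    rw [diagonalLength_sub_one _ _ hn, h, norm_neg, hxα]
  obtain rfl | hj₂ := eq_or_ne j 1
  · rw [diagonalLength_one _ _ (by omega), polygonVertex_succ x (by omega), polygonVertex_zero,
      zero_add, hxα]
  obtain ⟨k, rfl⟩ := Nat.exists_eq_add_of_le' (show 2 ≤ j by omega)
  rw [diagonalLength_add_two _ _ (by omega)]

/-- the image of the bending system for the caterpillar triangulation is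
the polytope cut out by the triangle inequalities. -/
theorem stmt_15 (n : ℕ) (hn : 4 ≤ n) (α : Fin n → ℝ) (hα : ∀ i, 0 < α i) :
    Set.range (fun x : polygonSet α => fun k : Fin (n-3) =>
        ‖∑ i ∈ Finset.univ.filter (fun i : Fin n => i.1 ≤ k.1 + 1), x.1 i‖)
      = { v : Fin (n-3) → ℝ | ∀ k : ℕ, 1 ≤ k → k ≤ n - 2 →
          |extSeq α v (k-1) - wlab α (k+1)| ≤ extSeq α v k ∧
            extSeq α v k ≤ extSeq α v (k-1) + wlab α (k+1) } := by
  have hΦ (x : Fin n → R3) (k : Fin (n - 3)) :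
      ∑ i ∈ Finset.univ.filter (fun i : Fin n => i.1 ≤ k.1 + 1), x i
        = polygonVertex x (k + 2) := by
    simp [polygonVertex, Nat.lt_succ_iff]
  simp only [hΦ]
  ext v
  rw [Set.mem_ofPred_eq, forall_triangle_extSeq_iff α v (by omega) fun i => (hα i).le]
  constructor
  · rintro ⟨⟨x, hxα, hx₀⟩, rfl⟩ j hj
    rw [diagonalLength_polygonVertex (by omega) hxα hx₀ hj.le,
      diagonalLength_polygonVertex (by omega) hxα hx₀ hj, polygonVertex_succ x hj,
      wlab_succ α hj, ← hxα]
    exact ⟨by simpa using abs_norm_sub_norm_le (polygonVertex x j) (-x ⟨j, hj⟩), norm_add_le _ _⟩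
  · intro hv
    obtain ⟨x, hxα, hx₀, hxd⟩ := exists_closed_polygon (E := R3) (by simp)
      (diagonalLength_zero α v) (diagonalLength_self α v) hv
    have hx : x ∈ polygonSet α := ⟨fun i => by rw [hxα, wlab_succ α i.2], hx₀⟩
    exact ⟨⟨x, hx⟩, funext fun k => (hxd _ (by omega)).trans (diagonalLength_add_two α v k.2)⟩
end
end
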